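/- arXiv:1712.06770 — 8 statements merged into one kernel-verified Lean document; each statement's English description precedes it below -/
import Mathlib

section
/- Let a_1,...,a_k, b, n be integers with n ≥ 1, and suppose gcd(a_1,...,a_k,n) divides b. Then the number of solutions (x_1,...,x_k) ∈ (Z/nZ)^k of the congruence a_1x_1 + ... + a_kx_k ≡ b (mod n) is exactly gcd(a_1,...,a_k,n) · n^{k-1}. -/
/-!
The solution set is a fibre of the `ZMod n`-linear map `x ↦ ∑ aᵢ xᵢ` on `(ZMod n)ᵏ`. Its image is
the ideal generated by the `aᵢ`, which (as `n = 0` in `ZMod n`) is generated by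
`d = gcd(a₁, …, aₖ, n)` and so has `n / d` elements; it contains `b` because `d ∣ b`. Every nonempty
fibre is a coset of the kernel, hence has `nᵏ / (n / d) = d nᵏ⁻¹` elements.
-/

open Finset

theorem Ideal.span_image_eq_span_gcd {R ι : Type*} [CommRing R] [IsDomain R] [IsBezout R]
    [NormalizedGCDMonoid R] (s : Finset ι) (f : ι → R) :
    Ideal.span (f '' s) = Ideal.span {s.gcd f} := by
  classical
  induction s using Finset.induction_on with
  | empty => simp
  | insert i s _ ih =>
    rw [coe_insert, Set.image_insert_eq, Ideal.span_insert, ih, gcd_insert, span_gcd,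
      Ideal.span_insert]

theorem Ideal.span_range_intCast {R ι : Type*} [CommRing R] [Fintype ι] (a : ι → ℤ) :
    Ideal.span (Set.range fun i ↦ (a i : R)) = Ideal.span {((univ.gcd a : ℤ) : R)} := by
  have h := congrArg (Ideal.map (Int.castRingHom R)) (Ideal.span_image_eq_span_gcd univ a)
  rwa [Ideal.map_span, Ideal.map_span, coe_univ, Set.image_univ, ← Set.range_comp,
    Set.image_singleton] at h

theorem ZMod.span_intCast_eq_span_gcd (n : ℕ) (A : ℤ) :
    Ideal.span {(A : ZMod n)} = Ideal.span {((A.gcd n : ℕ) : ZMod n)} := by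
  have h := congrArg (Ideal.map (Int.castRingHom (ZMod n))) (span_gcd A (n : ℤ))
  rw [Ideal.map_span, Ideal.map_span, Set.image_pair, Set.image_singleton] at h
  simpa [← Int.coe_gcd, Ideal.span_pair_zero] using h.symm

theorem ZMod.card_span_natCast {n d : ℕ} [NeZero n] (hd : d ∣ n) :
    Nat.card (Ideal.span {(d : ZMod n)}) = n / d := by
  have h : (Ideal.span {(d : ZMod n)} : Set (ZMod n)) = AddSubgroup.zmultiples (d : ZMod n) := by
    ext x
    simp only [SetLike.mem_coe, Ideal.mem_span_singleton', AddSubgroup.mem_zmultiples_iff]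
    constructor
    · rintro ⟨c, rfl⟩
      obtain ⟨m, rfl⟩ := ZMod.intCast_surjective c
      exact ⟨m, by simp⟩
    · rintro ⟨m, rfl⟩
      exact ⟨m, by simp⟩
  rw [← SetLike.coe_sort_coe, h, SetLike.coe_sort_coe, Nat.card_zmultiples,
    ZMod.addOrderOf_coe _ (NeZero.ne n), Nat.gcd_eq_right hd]

theorem AddMonoidHom.card_fiber_mul_card_range {G H : Type*} [AddGroup G] [AddGroup H]
    (f : G →+ H) {b : H} (hb : b ∈ f.range) :
    Nat.card (f ⁻¹' {b}) * Nat.card f.range = Nat.card G := by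
  obtain ⟨a, rfl⟩ := hb
  rw [Nat.card_congr (f.fiberEquivKer a), ← AddSubgroup.index_ker, AddSubgroup.card_mul_index]

theorem LinearMap.card_fiber_mul_card_range {R M N : Type*} [Semiring R] [AddCommGroup M]
    [AddCommGroup N] [Module R M] [Module R N] (f : M →ₗ[R] N) {b : N} (hb : b ∈ range f) :
    Nat.card (f ⁻¹' {b}) * Nat.card (range f) = Nat.card M :=
  f.toAddMonoidHom.card_fiber_mul_card_range hb

theorem stmt_1 (k n : ℕ) (hn : 1 ≤ n) (hk : 1 ≤ k) (a : Fin k → ℤ) (b : ℤ)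
    (h : (Int.gcd (Finset.univ.gcd a) n : ℤ) ∣ b) :
    Nat.card {x : Fin k → ZMod n // ∑ i, (a i : ZMod n) * x i = (b : ZMod n)} =
      Int.gcd (Finset.univ.gcd a) n * n ^ (k - 1) := by
  have : NeZero n := ⟨by omega⟩
  set d := Int.gcd (univ.gcd a) n
  have hd : d ∣ n := Int.ofNat_dvd.mp (Int.gcd_dvd_right _ _)
  let f := Fintype.linearCombination (ZMod n) fun i ↦ (a i : ZMod n)
  have hrange : LinearMap.range f = Ideal.span {(d : ZMod n)} := by
    rw [Fintype.range_linearCombination]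
    exact (Ideal.span_range_intCast a).trans (ZMod.span_intCast_eq_span_gcd n _)
  have hb : (b : ZMod n) ∈ LinearMap.range f := by
    rw [hrange, Ideal.mem_span_singleton, ← Int.cast_natCast]
    exact map_dvd (Int.castRingHom (ZMod n)) h
  have hcount := f.card_fiber_mul_card_range hb
  have hpow : n ^ k = d * n ^ (k - 1) * (n / d) := by
    rw [mul_right_comm, Nat.mul_div_cancel' hd, ← pow_succ', Nat.sub_add_cancel hk]
  rw [hrange, ZMod.card_span_natCast hd, Nat.card_fun, Nat.card_zmod, Nat.card_fin, hpow] at hcount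
  calc Nat.card {x : Fin k → ZMod n // ∑ i, (a i : ZMod n) * x i = (b : ZMod n)}
      = Nat.card (f ⁻¹' {(b : ZMod n)}) :=
        Nat.card_congr <| Equiv.subtypeEquivRight fun x ↦ by
          simp [f, Fintype.linearCombination_apply, mul_comm]
    _ = d * n ^ (k - 1) :=
        Nat.eq_of_mul_eq_mul_right (Nat.div_pos (Nat.le_of_dvd (by omega) hd)
          (Nat.pos_of_dvd_of_pos hd (by omega))) hcount
end

section
/- Let p be a prime and let a_1,...,a_k be integers such that a_1 + ... + a_k ≡ 0 (mod p), but for every nonempty proper subset I of {1,...,k}, the sum of a_i over i ∈ I is not divisible by p. Then the number of solutions (x_1,...,x_k) ∈ (Z/pZ)^k of a_1x_1 + ... + a_kx_k ≡ 0 (mod p) with all x_i pairwise distinct equals (-1)^{k-1}(k-1)!(p-1) + (p-1)(p-2)···(p-k+1). -/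
open Finset Function Fin

private lemma count_split {α : Type*} [Fintype α] {n : ℕ} (P : α → Prop) (Q : Fin n → α → Prop)
    (hdisj : ∀ a, P a → ∀ j j', Q j a → Q j' a → j = j') :
    Nat.card {a // P a} =
      Nat.card {a // P a ∧ ∀ j, ¬ Q j a} + ∑ j, Nat.card {a // P a ∧ Q j a} := by
  classical
  simp only [Nat.card_eq_fintype_card, Fintype.card_subtype]
  have key : univ.filter P =
      (univ.filter fun a => P a ∧ ∀ j, ¬ Q j a) ∪
        univ.biUnion (fun j => univ.filter fun a => P a ∧ Q j a) := by
    ext a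
    simp only [mem_filter, mem_union, mem_biUnion, mem_univ, true_and]
    by_cases hP : P a
    · by_cases hQ : ∀ j, ¬ Q j a
      · tauto
      · push_neg at hQ; tauto
    · tauto
  rw [key, card_union_of_disjoint, card_biUnion]
  · intro j _ j' hj' hjj'
    simp only [disjoint_left, mem_filter, mem_univ, true_and]
    rintro a ⟨hPa, hQ⟩ ⟨_, hQ'⟩
    exact hjj' (hdisj a hPa _ _ hQ hQ')
  · simp only [disjoint_left, mem_filter, mem_biUnion, mem_univ, true_and, not_exists]
    rintro a ⟨hPa, hall⟩ j ⟨_, hQ⟩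
    exact hall j hQ

private lemma descFactorial_cast (q : ℕ) : ∀ m : ℕ,
    ((q.descFactorial m : ℤ)) = ∏ j ∈ Finset.range m, ((q : ℤ) - j) := by
  intro m
  induction m with
  | zero => simp
  | succ n ih =>
    rw [Finset.prod_range_succ, ← ih, Nat.descFactorial_succ]
    rcases lt_or_ge n q with h | h
    · push_cast [Nat.cast_sub h.le]
      ring
    · have h0 : q - n = 0 := Nat.sub_eq_zero_of_le h
      rcases eq_or_lt_of_le h with rfl | h'
      · rw [h0]; push_cast; ring
      · have : q.descFactorial n = 0 := Nat.descFactorial_eq_zero_iff_lt.mpr h'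
        rw [h0, this]; push_cast; ring

private lemma card_inj {F : Type*} [Fintype F] (m : ℕ) :
    (Nat.card {z : Fin m → F // Function.Injective z} : ℤ) =
      ∏ j ∈ Finset.range m, ((Fintype.card F : ℤ) - j) := by
  classical
  rw [Nat.card_congr (Equiv.subtypeInjectiveEquivEmbedding (Fin m) F),
    Nat.card_eq_fintype_card, Fintype.card_embedding_eq, Fintype.card_fin,
    descFactorial_cast]

private lemma lemV {F : Type*} [Field F] [Fintype F] : ∀ (m : ℕ) (b : Fin m → F),
    (∀ I : Finset (Fin m), I.Nonempty → ∑ i ∈ I, b i ≠ 0) →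
    (Nat.card {y : Fin m → F // ∑ i, b i * y i = 0 ∧ Function.Injective y} : ℤ) =
      ∏ j ∈ Finset.range (m - 1), ((Fintype.card F : ℤ) - (j + 1)) := by
  intro m
  induction m with
  | zero =>
    intro b hb
    rw [Nat.card_congr (Equiv.subtypeUnivEquiv (by
      intro y
      exact ⟨by simp, fun i => absurd i.2 (by simp)⟩))]
    simp [Nat.card_eq_fintype_card]
  | succ m ih =>
    intro b hb
    classical
    have hc : b (last m) ≠ 0 := by simpa using hb {last m} ⟨last m, mem_singleton_self _⟩
    set bj : Fin m → Fin m → F := fun j i =>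
      if i = j then b j.castSucc + b (last m) else b i.castSucc with hbjdef
    have sumbj : ∀ (j : Fin m) (z : Fin m → F),
        ∑ i, bj j i * z i = (∑ i : Fin m, b i.castSucc * z i) + b (last m) * z j := by
      intro j z
      have : ∀ i : Fin m, bj j i * z i
          = b i.castSucc * z i + (if i = j then b (last m) * z i else 0) := by
        intro i
        simp only [hbjdef]
        by_cases h : i = j
        · subst h; simp; ring
        · simp [h]
      rw [Finset.sum_congr rfl fun i _ => this i, Finset.sum_add_distrib,
        Finset.sum_ite_eq' univ j (fun i => b (last m) * z i)]
      simp
    have hbj : ∀ (j : Fin m) (I : Finset (Fin m)), I.Nonempty → ∑ i ∈ I, bj j i ≠ 0 := by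
      intro j I hI
      have csum : ∑ i ∈ I, bj j i =
          ∑ i ∈ I, b i.castSucc + (if j ∈ I then b (last m) else 0) := by
        have : ∀ i ∈ I, bj j i = b i.castSucc + (if i = j then b (last m) else 0) := by
          intro i _
          simp only [hbjdef]
          by_cases h : i = j
          · subst h; simp
          · simp [h]
        rw [Finset.sum_congr rfl this, Finset.sum_add_distrib, Finset.sum_ite_eq' I j]
      set emb : Fin m ↪ Fin (m+1) := ⟨Fin.castSucc, Fin.castSucc_injective m⟩ with hemb
      by_cases hj : j ∈ I
      · have key : ∑ i ∈ I, bj j i = ∑ i ∈ insert (last m) (I.map emb), b i := by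
          rw [Finset.sum_insert (by
            intro hmem
            obtain ⟨x, -, hx⟩ := Finset.mem_map.mp hmem
            exact (Fin.castSucc_lt_last x).ne hx)]
          rw [Finset.sum_map, csum, if_pos hj]
          simp [hemb]; ring
        rw [key]
        exact hb _ ⟨last m, mem_insert_self _ _⟩
      · have key : ∑ i ∈ I, bj j i = ∑ i ∈ I.map emb, b i := by
          rw [Finset.sum_map, csum, if_neg hj]
          simp [hemb]
        rw [key]
        exact hb _ hI.map
    have e : {y : Fin (m+1) → F // ∑ i, b i * y i = 0 ∧ Function.Injective y} ≃
        {z : Fin m → F // Function.Injective z ∧ ∀ j, ¬ (∑ i, bj j i * z i = 0)} := by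
      refine ⟨fun y => ⟨fun i => y.1 i.castSucc, ?_, ?_⟩,
        fun z => ⟨Fin.lastCases (-(b (last m))⁻¹ * ∑ i : Fin m, b i.castSucc * z.1 i) z.1,
          ?_, ?_⟩, ?_, ?_⟩
      · exact fun i1 i2 h => Fin.castSucc_injective m (y.2.2 h)
      · intro j hj
        rw [sumbj] at hj
        have hs0 : (∑ i : Fin m, b i.castSucc * y.1 i.castSucc)
            + b (last m) * y.1 (last m) = 0 := by
          have := y.2.1
          rwa [Fin.sum_univ_castSucc (f := fun i => b i * y.1 i)] at this
        have h2 : b (last m) * (y.1 j.castSucc - y.1 (last m)) = 0 := by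
          linear_combination hj - hs0
        rcases mul_eq_zero.mp h2 with h | h
        · exact hc h
        · exact (Fin.castSucc_lt_last j).ne (y.2.2 (sub_eq_zero.mp h))
      · simp only [Fin.sum_univ_castSucc, Fin.lastCases_castSucc, Fin.lastCases_last]
        field_simp
        ring
      · intro i1 i2 h
        rcases Fin.eq_castSucc_or_eq_last i1 with ⟨j1, rfl⟩ | rfl <;>
          rcases Fin.eq_castSucc_or_eq_last i2 with ⟨j2, rfl⟩ | rfl
        · simp only [Fin.lastCases_castSucc] at h
          exact congrArg Fin.castSucc (z.2.1 h)
        · exfalso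
          simp only [Fin.lastCases_castSucc, Fin.lastCases_last] at h
          refine z.2.2 j1 ?_
          rw [sumbj, h]
          field_simp
          ring
        · exfalso
          simp only [Fin.lastCases_castSucc, Fin.lastCases_last] at h
          refine z.2.2 j2 ?_
          rw [sumbj, ← h]
          field_simp
          ring
        · rfl
      · intro y
        ext i
        rcases Fin.eq_castSucc_or_eq_last i with ⟨j, rfl⟩ | rfl
        · simp [Fin.lastCases_castSucc]
        · simp only [Fin.lastCases_last]
          have hs0 : (∑ i : Fin m, b i.castSucc * y.1 i.castSucc)
              + b (last m) * y.1 (last m) = 0 := by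
            have := y.2.1
            rwa [Fin.sum_univ_castSucc (f := fun i => b i * y.1 i)] at this
          rw [show (∑ i : Fin m, b i.castSucc * y.1 i.castSucc)
              = -(b (last m) * y.1 (last m)) by linear_combination hs0]
          field_simp
      · intro z
        ext i
        simp [Fin.lastCases_castSucc]
    rw [Nat.card_congr e]
    have hsplit := count_split (Function.Injective (α := Fin m) (β := F))
      (fun j z => ∑ i, bj j i * z i = 0) ?_
    swap
    · intro z hz j j' hQ hQ'
      rw [sumbj] at hQ hQ'
      have h2 : b (last m) * (z j - z j') = 0 := by linear_combination hQ - hQ'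
      rcases mul_eq_zero.mp h2 with h | h
      · exact absurd h hc
      · exact hz (sub_eq_zero.mp h)
    have hbad : ∀ j : Fin m,
        (Nat.card {z : Fin m → F // Function.Injective z ∧ ∑ i, bj j i * z i = 0} : ℤ) =
        ∏ j ∈ Finset.range (m - 1), ((Fintype.card F : ℤ) - (j + 1)) := by
      intro j
      rw [Nat.card_congr (Equiv.subtypeEquivRight (fun z => and_comm))]
      exact ih (bj j) (hbj j)
    have hz : (Nat.card {z : Fin m → F //
          Function.Injective z ∧ ∀ j, ¬ (∑ i, bj j i * z i = 0)} : ℤ)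
        = (Nat.card {z : Fin m → F // Function.Injective z} : ℤ)
          - ∑ j : Fin m, (Nat.card {z : Fin m → F //
              Function.Injective z ∧ ∑ i, bj j i * z i = 0} : ℤ) := by
      rw [hsplit]; push_cast; ring
    rw [hz, card_inj]
    rw [Finset.sum_congr rfl (fun j _ => hbad j), Finset.sum_const, Finset.card_univ,
      Fintype.card_fin, nsmul_eq_mul]
    rcases m with _ | n
    · simp
    · rw [Nat.add_sub_cancel, Nat.add_sub_cancel]
      rw [Finset.prod_range_succ' (fun j => (Fintype.card F : ℤ) - j) n,
        Finset.prod_range_succ (fun j => (Fintype.card F : ℤ) - (j+1)) n]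
      push_cast
      ring
private lemma lemW {F : Type*} [Field F] [Fintype F] : ∀ (m : ℕ) (b : Fin m → F),
    (∀ I : Finset (Fin m), I.Nonempty → ∑ i ∈ I, b i ≠ 0) →
    (Fintype.card F : ℤ) * (Nat.card {y : Fin m → F //
        ∑ i, b i * y i = 0 ∧ Function.Injective y ∧ ∀ i, y i ≠ 0} : ℤ) =
      (-1) ^ m * (Nat.factorial m : ℤ) * ((Fintype.card F : ℤ) - 1) +
        ∏ j ∈ Finset.range m, ((Fintype.card F : ℤ) - (j + 1)) := by
  intro m
  induction m with
  | zero =>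
    intro b hb
    rw [Nat.card_congr (Equiv.subtypeUnivEquiv (fun y =>
      ⟨by simp, fun i1 i2 h => Subsingleton.elim _ _, fun i => absurd i.2 (by simp)⟩))]
    simp only [Nat.card_eq_fintype_card]
    simp

  | succ m ih =>
    intro b hb
    classical
    have hsplit := count_split
      (fun y : Fin (m+1) → F => ∑ i, b i * y i = 0 ∧ Function.Injective y)
      (fun j y => y j = 0) ?_
    swap
    · rintro y ⟨-, hinj⟩ j j' hj hj'
      exact hinj (hj.trans hj'.symm)
    have egood : {y : Fin (m+1) → F //
          (∑ i, b i * y i = 0 ∧ Function.Injective y) ∧ ∀ j, ¬ y j = 0} ≃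
        {y : Fin (m+1) → F //
          ∑ i, b i * y i = 0 ∧ Function.Injective y ∧ ∀ i, y i ≠ 0} :=
      Equiv.subtypeEquivRight (fun y => by tauto)
    have ebad : ∀ j : Fin (m+1),
        {y : Fin (m+1) → F // (∑ i, b i * y i = 0 ∧ Function.Injective y) ∧ y j = 0} ≃
        {z : Fin m → F //
          ∑ i, b (j.succAbove i) * z i = 0 ∧ Function.Injective z ∧ ∀ i, z i ≠ 0} := by
      intro j
      refine ⟨fun y => ⟨fun i => y.1 (j.succAbove i), ?_, ?_, ?_⟩,
        fun z => ⟨j.insertNth 0 z.1, ⟨?_, ?_⟩, ?_⟩, ?_, ?_⟩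
      · have := Fin.sum_univ_succAbove (fun i => b i * y.1 i) j
        rw [y.2.1.1] at this
        rw [show y.1 j = 0 from y.2.2] at this
        linear_combination -this
      · exact fun i1 i2 h => Fin.succAbove_right_injective (y.2.1.2 h)
      · intro i hi
        have : j.succAbove i = j := y.2.1.2 (hi.trans y.2.2.symm)
        exact Fin.succAbove_ne j i this
      · have h := Fin.sum_univ_succAbove
          (fun i => b i * (j.insertNth 0 z.1 : Fin (m+1) → F) i) j
        simp only [Fin.insertNth_apply_same, Fin.insertNth_apply_succAbove] at h
        rw [h, z.2.1]
        ring
      · intro i1 i2 h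
        by_cases h1 : i1 = j <;> by_cases h2 : i2 = j
        · exact h1.trans h2.symm
        · exfalso
          obtain ⟨k2, hk2⟩ := Fin.exists_succAbove_eq h2
          rw [h1, ← hk2] at h
          simp only [Fin.insertNth_apply_same, Fin.insertNth_apply_succAbove] at h
          exact z.2.2.2 k2 h.symm
        · exfalso
          obtain ⟨k1, hk1⟩ := Fin.exists_succAbove_eq h1
          rw [h2, ← hk1] at h
          simp only [Fin.insertNth_apply_same, Fin.insertNth_apply_succAbove] at h
          exact z.2.2.2 k1 h
        · obtain ⟨k1, hk1⟩ := Fin.exists_succAbove_eq h1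
          obtain ⟨k2, hk2⟩ := Fin.exists_succAbove_eq h2
          rw [← hk1, ← hk2] at h
          simp only [Fin.insertNth_apply_succAbove] at h
          rw [← hk1, ← hk2]
          exact congrArg _ (z.2.2.1 h)
      · exact Fin.insertNth_apply_same (α := fun _ => F) j 0 z.1
      · intro y
        ext i
        rcases eq_or_ne i j with rfl | hi
        · simp only [Fin.insertNth_apply_same]
          exact y.2.2.symm
        · obtain ⟨k, rfl⟩ := Fin.exists_succAbove_eq hi
          simp only [Fin.insertNth_apply_succAbove]
      · intro z
        ext i
        simp [Fin.insertNth_apply_succAbove]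
    have h1 := Nat.card_congr egood
    have h2 : ∀ j : Fin (m+1), Nat.card {y : Fin (m+1) → F //
          (∑ i, b i * y i = 0 ∧ Function.Injective y) ∧ y j = 0}
        = Nat.card {z : Fin m → F //
          ∑ i, b (j.succAbove i) * z i = 0 ∧ Function.Injective z ∧ ∀ i, z i ≠ 0} :=
      fun j => Nat.card_congr (ebad j)
    have keyN : Nat.card {y : Fin (m+1) → F // ∑ i, b i * y i = 0 ∧ Function.Injective y}
        = Nat.card {y : Fin (m+1) → F //
            ∑ i, b i * y i = 0 ∧ Function.Injective y ∧ ∀ i, y i ≠ 0}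
          + ∑ j : Fin (m+1), Nat.card {z : Fin m → F //
              ∑ i, b (j.succAbove i) * z i = 0 ∧ Function.Injective z ∧ ∀ i, z i ≠ 0} := by
      rw [hsplit, h1]
      exact congrArg _ (Finset.sum_congr rfl fun j _ => h2 j)
    have keyZ : (Nat.card {y : Fin (m+1) → F // ∑ i, b i * y i = 0 ∧ Function.Injective y} : ℤ)
        = (Nat.card {y : Fin (m+1) → F //
            ∑ i, b i * y i = 0 ∧ Function.Injective y ∧ ∀ i, y i ≠ 0} : ℤ)
          + ∑ j : Fin (m+1), (Nat.card {z : Fin m → F //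
              ∑ i, b (j.succAbove i) * z i = 0 ∧ Function.Injective z ∧ ∀ i, z i ≠ 0} : ℤ) := by
      rw [keyN]; push_cast; ring
    have hbj : ∀ j : Fin (m+1), ∀ I : Finset (Fin m), I.Nonempty →
        ∑ i ∈ I, b (j.succAbove i) ≠ 0 := by
      intro j I hI
      rw [show ∑ i ∈ I, b (j.succAbove i)
          = ∑ i ∈ I.map ⟨j.succAbove, Fin.succAbove_right_injective⟩, b i from
        (Finset.sum_map I ⟨j.succAbove, Fin.succAbove_right_injective⟩ b).symm]
      exact hb _ hI.map
    have hV := lemV (m+1) b hb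
    rw [Nat.add_sub_cancel] at hV
    have hfin : (Fintype.card F : ℤ) * (Nat.card {y : Fin (m+1) → F //
          ∑ i, b i * y i = 0 ∧ Function.Injective y ∧ ∀ i, y i ≠ 0} : ℤ)
        = (Fintype.card F : ℤ) * (∏ j ∈ Finset.range m, ((Fintype.card F : ℤ) - (j + 1)))
          - ∑ j : Fin (m+1), ((Fintype.card F : ℤ) * (Nat.card {z : Fin m → F //
              ∑ i, b (j.succAbove i) * z i = 0 ∧ Function.Injective z ∧ ∀ i, z i ≠ 0} : ℤ)) := by
      rw [← hV, keyZ, ← Finset.mul_sum]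
      ring
    rw [hfin, Finset.sum_congr rfl (fun j _ => ih (fun i => b (j.succAbove i)) (hbj j)),
      Finset.sum_const, Finset.card_univ, Fintype.card_fin, nsmul_eq_mul,
      Finset.prod_range_succ, Nat.factorial_succ]
    push_cast
    ring
theorem stmt_3 (p : ℕ) (hp : p.Prime) (k : ℕ) (hk : 1 ≤ k) (a : Fin k → ℤ)
    (hsum : (p : ℤ) ∣ ∑ i, a i)
    (hI : ∀ I : Finset (Fin k), I.Nonempty → I ≠ Finset.univ → ¬ (p : ℤ) ∣ ∑ i ∈ I, a i) :
    (Nat.card {x : Fin k → ZMod p //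
        ∑ i, (a i : ZMod p) * x i = 0 ∧ Function.Injective x} : ℤ) =
      (-1) ^ (k - 1) * (Nat.factorial (k - 1) : ℤ) * ((p : ℤ) - 1) +
        ∏ j ∈ Finset.range (k - 1), ((p : ℤ) - (j + 1)) := by
  haveI : Fact p.Prime := ⟨hp⟩
  haveI : NeZero p := ⟨hp.ne_zero⟩
  obtain ⟨m, rfl⟩ : ∃ m, k = m + 1 := ⟨k - 1, (Nat.succ_pred_eq_of_pos hk).symm⟩
  classical
  have hA0 : (∑ i, (a i : ZMod p)) = 0 := by
    have h := (ZMod.intCast_zmod_eq_zero_iff_dvd _ p).mpr hsum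
    push_cast at h
    exact h
  have e2 : (∑ i : Fin m, (a i.castSucc : ZMod p)) + (a (last m) : ZMod p) = 0 := by
    rw [← Fin.sum_univ_castSucc (f := fun i => (a i : ZMod p))]; exact hA0
  have hb : ∀ I : Finset (Fin m), I.Nonempty → ∑ i ∈ I, (a i.castSucc : ZMod p) ≠ 0 := by
    intro I hInon h0
    set emb : Fin m ↪ Fin (m+1) := ⟨Fin.castSucc, Fin.castSucc_injective m⟩ with hemb
    have hne : I.map emb ≠ Finset.univ := by
      intro hu
      have : last m ∈ I.map emb := hu ▸ Finset.mem_univ _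
      obtain ⟨x, -, hx⟩ := Finset.mem_map.mp this
      exact (Fin.castSucc_lt_last x).ne hx
    refine hI (I.map emb) hInon.map hne ?_
    refine (ZMod.intCast_zmod_eq_zero_iff_dvd _ p).mp ?_
    have : ((∑ i ∈ I.map emb, a i : ℤ) : ZMod p) = ∑ i ∈ I, (a i.castSucc : ZMod p) := by
      rw [Finset.sum_map]
      push_cast
      rfl
    rw [this]
    exact h0
  -- the translation equivalence
  have e : {x : Fin (m+1) → ZMod p // ∑ i, (a i : ZMod p) * x i = 0 ∧ Function.Injective x} ≃
      (ZMod p) × {y : Fin m → ZMod p //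
        ∑ i, (a i.castSucc : ZMod p) * y i = 0 ∧ Function.Injective y ∧ ∀ i, y i ≠ 0} := by
    refine ⟨fun x => ⟨x.1 (last m),
        fun i => x.1 i.castSucc - x.1 (last m), ?_, ?_, ?_⟩,
      fun cy => ⟨fun i => Fin.lastCases cy.1 (fun i' => cy.2.1 i' + cy.1) i, ?_, ?_⟩, ?_, ?_⟩
    · have e1 : (∑ i : Fin m, (a i.castSucc : ZMod p) * x.1 i.castSucc)
          + (a (last m) : ZMod p) * x.1 (last m) = 0 := by
        rw [← Fin.sum_univ_castSucc (f := fun i => (a i : ZMod p) * x.1 i)]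
        exact x.2.1
      simp only [mul_sub]
      rw [Finset.sum_sub_distrib, ← Finset.sum_mul]
      linear_combination e1 - x.1 (last m) * e2
    · intro i1 i2 h
      have : x.1 i1.castSucc = x.1 i2.castSucc := by
        have := sub_left_injective h
        exact this
      exact Fin.castSucc_injective m (x.2.2 this)
    · intro i h0
      have : x.1 i.castSucc = x.1 (last m) := sub_eq_zero.mp h0
      exact (Fin.castSucc_lt_last i).ne (x.2.2 this)
    · simp only [Fin.sum_univ_castSucc, Fin.lastCases_castSucc, Fin.lastCases_last]
      simp only [mul_add]
      rw [Finset.sum_add_distrib, ← Finset.sum_mul]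
      linear_combination cy.2.2.1 + cy.1 * e2
    · intro i1 i2 h
      rcases Fin.eq_castSucc_or_eq_last i1 with ⟨j1, rfl⟩ | rfl <;>
        rcases Fin.eq_castSucc_or_eq_last i2 with ⟨j2, rfl⟩ | rfl
      · simp only [Fin.lastCases_castSucc] at h
        exact congrArg Fin.castSucc (cy.2.2.2.1 (add_right_cancel h))
      · exfalso
        simp only [Fin.lastCases_castSucc, Fin.lastCases_last] at h
        exact cy.2.2.2.2 j1 (by linear_combination h)
      · exfalso
        simp only [Fin.lastCases_castSucc, Fin.lastCases_last] at h
        exact cy.2.2.2.2 j2 (by linear_combination -h)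
      · rfl
    · intro x
      ext i
      rcases Fin.eq_castSucc_or_eq_last i with ⟨j, rfl⟩ | rfl
      · simp only [Fin.lastCases_castSucc]
        ring
      · simp only [Fin.lastCases_last]
    · intro cy
      refine Prod.ext ?_ ?_
      · simp only [Fin.lastCases_last]
      · apply Subtype.ext
        funext i
        simp only [Fin.lastCases_castSucc, Fin.lastCases_last]
        ring
  have hW := lemW (F := ZMod p) m (fun i => (a i.castSucc : ZMod p)) hb
  rw [ZMod.card] at hW
  have hcard : Nat.card {x : Fin (m+1) → ZMod p //
        ∑ i, (a i : ZMod p) * x i = 0 ∧ Function.Injective x}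
      = p * Nat.card {y : Fin m → ZMod p //
          ∑ i, (a i.castSucc : ZMod p) * y i = 0 ∧ Function.Injective y ∧ ∀ i, y i ≠ 0} := by
    rw [Nat.card_congr e, Nat.card_prod, Nat.card_zmod]
  rw [hcard, Nat.add_sub_cancel]
  push_cast
  rw [hW]
end

section
/- Let a_1,...,a_k, b, n be integers with n ≥ 1, and suppose that gcd(∑_{i∈I} a_i, n) = 1 for every nonempty proper subset I of {1,...,k}. If gcd(a_1 + ... + a_k, n) does not divide b, then the number of solutions (x_1,...,x_k) ∈ (Z/nZ)^k of a_1x_1 + ... + a_kx_k ≡ b (mod n) with all x_i pairwise distinct equals (-1)^k (k-1)! + (n-1)(n-2)···(n-k+1). -/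
/-!
Induction on the number `k` of unknowns. Consider the solutions whose first `k - 1` coordinates
are distinct. The coefficients of those coordinates sum to a unit, so translating them by a common
constant shows that every value of the last coordinate has the same number of completions; hence
there are `n (n - 1) ⋯ (n - k + 2)` such solutions. One of them fails to be injective exactly when
its last coordinate equals the `j`-th one for a unique `j < k`, and merging the last unknown into
the `j`-th gives a system in `k - 1` unknowns with the same total coefficient that again satisfies
the hypotheses, so the induction hypothesis counts these.
-/

open Finset Function

theorem ZMod.isUnit_intCast_of_gcd_eq_one {s : ℤ} {n : ℕ} (h : Int.gcd s n = 1) :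
    IsUnit (s : ZMod n) :=
  (ZMod.unitOfIsCoprime s (Int.isCoprime_iff_gcd_eq_one.mpr h)).isUnit

theorem Int.gcd_dvd_of_intCast_mul_eq {s b : ℤ} {n : ℕ} {c : ZMod n}
    (h : (s : ZMod n) * c = b) : (Int.gcd s n : ℤ) ∣ b := by
  obtain ⟨t, rfl⟩ := ZMod.intCast_surjective c
  have hn : (n : ℤ) ∣ b - s * t :=
    (ZMod.intCast_eq_intCast_iff_dvd_sub _ _ _).mp (by simpa using h)
  have hs : (Int.gcd s n : ℤ) ∣ s * t := (Int.gcd_dvd_left s n).mul_right t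
  simpa using dvd_add ((Int.gcd_dvd_right s n).trans hn) hs

theorem Fin.exists_init_eq_last_of_not_injective {α : Type*} {k : ℕ} {x : Fin (k + 1) → α}
    (hinit : Injective (Fin.init x)) (hx : ¬ Injective x) :
    ∃ j, Fin.init x j = x (Fin.last k) := by
  by_contra! hne
  refine hx fun i i' h => ?_
  induction i using Fin.lastCases <;> induction i' using Fin.lastCases
  · rfl
  · exact absurd h.symm (hne _)
  · exact absurd h (hne _)
  · rw [hinit h]

variable {R : Type*} [CommRing R]

def distinctSolutions {ι : Type*} [Fintype ι] (a : ι → R) (b : R) : Set (ι → R) :=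
  {x | ∑ i, a i * x i = b ∧ Injective x}

def ProperSubsumsAreUnits {ι : Type*} [Fintype ι] (a : ι → R) : Prop :=
  ∀ I : Finset ι, I.Nonempty → I ≠ univ → IsUnit (∑ i ∈ I, a i)

theorem card_distinctSolutions_mul_card {ι : Type*} [Fintype ι] [Finite R] {a : ι → R}
    (ha : IsUnit (∑ i, a i)) (b : R) :
    Nat.card (distinctSolutions a b) * Nat.card R =
      (Nat.card R).descFactorial (Fintype.card ι) := by
  classical
  have := Fintype.ofFinite R
  obtain ⟨u, hu⟩ := ha
  have sum_add_const (y : ι → R) (c : R) :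
      ∑ i, a i * (y i + c) = ∑ i, a i * y i + u * c := by
    simp only [mul_add, sum_add_distrib, ← sum_mul, hu]
  let translate : distinctSolutions a b × R ≃ {x : ι → R // Injective x} :=
    { toFun := fun p => ⟨fun i => p.1.1 i + p.2, (add_left_injective p.2).comp p.1.2.2⟩
      invFun := fun x =>
        let c : R := ↑u⁻¹ * (∑ i, a i * x.1 i - b)
        ⟨⟨fun i => x.1 i + -c, by simp [c, sum_add_const],
          (add_left_injective _).comp x.2⟩, c⟩
      left_inv := by
        rintro ⟨⟨y, hy, -⟩, c⟩
        ext <;> simp [sum_add_const, hy]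
      right_inv := by intro x; ext i; simp }
  rw [← Nat.card_prod, Nat.card_congr translate,
    Nat.card_congr (Equiv.subtypeInjectiveEquivEmbedding ι R), Nat.card_eq_fintype_card,
    Fintype.card_embedding_eq, Nat.card_eq_fintype_card]

variable {k : ℕ}

def initInjSolutions (a : Fin (k + 1) → R) (b : R) : Set (Fin (k + 1) → R) :=
  {x | ∑ i, a i * x i = b ∧ Injective (Fin.init x)}

theorem card_initInjSolutions [Finite R] {a : Fin (k + 1) → R}
    (ha : IsUnit (∑ i, Fin.init a i)) (b : R) :
    Nat.card (initInjSolutions a b) = (Nat.card R).descFactorial k := by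
  let split : initInjSolutions a b ≃
      Σ v : R, distinctSolutions (Fin.init a) (b - a (Fin.last k) * v) :=
    (Equiv.subtypeEquiv (Fin.snocEquiv fun _ => R).symm fun x => by
      simp [initInjSolutions, distinctSolutions, Fin.sum_univ_castSucc, eq_sub_iff_add_eq,
        Fin.init]).trans
      (Equiv.subtypeProdEquivSigmaSubtype fun v y =>
        y ∈ distinctSolutions (Fin.init a) (b - a (Fin.last k) * v))
  have := Fintype.ofFinite R
  refine Nat.eq_of_mul_eq_mul_right (Nat.card_pos (α := R)) ?_
  rw [Nat.card_congr split, Nat.card_sigma, sum_mul]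
  simp_rw [card_distinctSolutions_mul_card ha, Fintype.card_fin, sum_const, card_univ,
    ← Nat.card_eq_fintype_card, smul_eq_mul, mul_comm]

/-- The coefficients of the system obtained by substituting `x (Fin.last k) := x j`. -/
def mergeLast (a : Fin (k + 1) → R) (j : Fin k) : Fin k → R :=
  Fin.init a + Pi.single j (a (Fin.last k))

theorem sum_mergeLast (a : Fin (k + 1) → R) (j : Fin k) (I : Finset (Fin k)) :
    ∑ i ∈ I, mergeLast a j i =
      ∑ i ∈ I, a i.castSucc + if j ∈ I then a (Fin.last k) else 0 := by
  simp [mergeLast, sum_add_distrib, Fin.init]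

theorem sum_mul_snoc_self (a : Fin (k + 1) → R) (y : Fin k → R) (j : Fin k) :
    ∑ i, a i * (Fin.snoc y (y j) : Fin (k + 1) → R) i = ∑ i, mergeLast a j i * y i := by
  simp [Fin.sum_univ_castSucc, mergeLast, add_mul, sum_add_distrib, Fin.init, Pi.single_apply]

theorem card_initInjSolutions_diff [Finite R] (a : Fin (k + 1) → R) (b : R) :
    Nat.card ↑(initInjSolutions a b \ distinctSolutions a b) =
      ∑ j, Nat.card (distinctSolutions (mergeLast a j) b) := by
  let merge : (Σ j, distinctSolutions (mergeLast a j) b) →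
      ↑(initInjSolutions a b \ distinctSolutions a b) :=
    fun p => ⟨Fin.snoc p.2.1 (p.2.1 p.1),
      ⟨by rw [sum_mul_snoc_self]; exact p.2.2.1, by rw [Fin.init_snoc]; exact p.2.2.2⟩,
      fun h => (Fin.castSucc_lt_last p.1).ne (h.2 (by simp))⟩
  have hmerge : Bijective merge := by
    constructor
    · rintro ⟨j, y, hy⟩ ⟨j', y', hy'⟩ h
      have h' : (Fin.snoc y (y j) : Fin (k + 1) → R) = Fin.snoc y' (y' j') :=
        congrArg Subtype.val h
      obtain ⟨rfl, hyj⟩ := Fin.snoc_injective2.eq_iff.mp h'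
      obtain rfl := hy.2 hyj
      rfl
    · rintro ⟨x, ⟨hx, hinit⟩, hninj⟩
      obtain ⟨j, hj⟩ :=
        Fin.exists_init_eq_last_of_not_injective hinit fun h => hninj ⟨hx, h⟩
      have hsnoc : Fin.snoc (Fin.init x) (Fin.init x j) = x := by rw [hj, Fin.snoc_init_self]
      refine ⟨⟨j, Fin.init x, ?_, hinit⟩, Subtype.ext hsnoc⟩
      rw [← sum_mul_snoc_self, hsnoc, hx]
  rw [← Nat.card_congr (Equiv.ofBijective merge hmerge), Nat.card_sigma]

theorem ProperSubsumsAreUnits.isUnit_sum_init {a : Fin (k + 2) → R}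
    (ha : ProperSubsumsAreUnits a) : IsUnit (∑ i, Fin.init a i) := by
  simpa [Fin.init] using ha (univ.map Fin.castSuccEmb) univ_nonempty.map fun h => by
    simpa using eq_univ_iff_forall.mp h (Fin.last _)

theorem ProperSubsumsAreUnits.mergeLast {a : Fin (k + 1) → R} (ha : ProperSubsumsAreUnits a)
    (j : Fin k) : ProperSubsumsAreUnits (mergeLast a j) := by
  intro I hI hIu
  rw [sum_mergeLast]
  split_ifs with hj
  · obtain ⟨m, hm⟩ : ∃ m, m ∉ I := by simpa [eq_univ_iff_forall] using hIu
    simpa [sum_cons, add_comm] using ha (cons (Fin.last k) (I.map Fin.castSuccEmb) (by simp))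
      (cons_nonempty _) fun h => hm (by simpa using eq_univ_iff_forall.mp h m.castSucc)
  · simpa using ha (I.map Fin.castSuccEmb) hI.map fun h => by
      simpa using eq_univ_iff_forall.mp h (Fin.last k)

theorem card_distinctSolutions [Finite R] (a : Fin (k + 1) → R) (b : R)
    (ha : ProperSubsumsAreUnits a) (hb : ∀ c, (∑ i, a i) * c ≠ b) :
    (Nat.card (distinctSolutions a b) : ℤ) =
      (-1) ^ (k + 1) * k.factorial + ∏ j ∈ range k, ((Nat.card R : ℤ) - (j + 1)) := by
  induction k with
  | zero =>
    have : IsEmpty (distinctSolutions a b) := ⟨fun x => hb (x.1 0) (by simpa using x.2.1)⟩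
    simp
  | succ k ih =>
    have hmerge (j : Fin (k + 1)) := ih (mergeLast a j) (ha.mergeLast j) fun c => by
      simpa [sum_mergeLast, ← Fin.sum_univ_castSucc] using hb c
    have hsplit := Set.ncard_sdiff_add_ncard_of_subset (s := distinctSolutions a b)
      (t := initInjSolutions a b) fun x hx => ⟨hx.1, hx.2.comp (Fin.castSucc_injective _)⟩
    rw [← Nat.card_coe_set_eq, ← Nat.card_coe_set_eq, ← Nat.card_coe_set_eq,
      card_initInjSolutions_diff, card_initInjSolutions ha.isUnit_sum_init] at hsplit
    have hdesc : ((Nat.card R).descFactorial (k + 1) : ℤ) =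
        Nat.card R * ∏ j ∈ range k, ((Nat.card R : ℤ) - (j + 1)) := by
      rw [← descPochhammer_eval_eq_descFactorial, descPochhammer_eval_eq_prod_range,
        prod_range_succ']
      simp [mul_comm]
    have hsplitℤ := congrArg (fun m : ℕ => (m : ℤ)) hsplit
    simp only [Nat.cast_add, Nat.cast_sum, hmerge, sum_const, card_univ, Fintype.card_fin,
      nsmul_eq_mul, hdesc] at hsplitℤ
    rw [prod_range_succ, Nat.factorial_succ]
    push_cast
    linear_combination hsplitℤ

theorem stmt_4 (k n : ℕ) (hn : 1 ≤ n) (hk : 1 ≤ k) (a : Fin k → ℤ) (b : ℤ)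
    (hI : ∀ I : Finset (Fin k), I.Nonempty → I ≠ Finset.univ →
      Int.gcd (∑ i ∈ I, a i) n = 1)
    (hb : ¬ (Int.gcd (∑ i, a i) n : ℤ) ∣ b) :
    (Nat.card {x : Fin k → ZMod n //
        ∑ i, (a i : ZMod n) * x i = (b : ZMod n) ∧ Function.Injective x} : ℤ) =
      (-1) ^ k * (Nat.factorial (k - 1) : ℤ) + ∏ j ∈ Finset.range (k - 1), ((n : ℤ) - (j + 1)) := by
  have : NeZero n := ⟨by omega⟩
  obtain ⟨k, rfl⟩ := Nat.exists_eq_add_of_le' hk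
  have hcount := card_distinctSolutions (fun i => (a i : ZMod n)) b
    (fun I hI' hIu => by simpa using ZMod.isUnit_intCast_of_gcd_eq_one (hI I hI' hIu))
    (fun c hc => hb (Int.gcd_dvd_of_intCast_mul_eq (c := c) (by simpa using hc)))
  rw [Nat.card_zmod] at hcount
  rw [Nat.add_sub_cancel]
  exact hcount
end

section
/- Let n ≥ 1 and k be positive integers. The number of k-tuples (x_1,...,x_k) ∈ (Z/nZ)^k with all coordinates pairwise distinct and x_1 + ... + x_k ≡ 0 (mod n) equals (-1)^{k-1}(k-1)!(gcd(k,n) - 1) + (n-1)(n-2)···(n-k+1), provided gcd(j, n) = 1 for all 1 ≤ j ≤ k-1. -/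
open Finset Function

section aux

variable (n : ℕ) [NeZero n]

/-- Solutions of `w * y 0 + y 1 + ... + y L = 0` with distinct coordinates. -/
def solSet (w L : ℕ) : Finset (Fin (L + 1) → ZMod n) :=
  Finset.univ.filter fun y =>
    ((w : ZMod n) * y 0 + ∑ i : Fin L, y i.succ = 0) ∧ Function.Injective y

lemma ker_card (w : ℕ) :
    (Finset.univ.filter fun c : ZMod n => (w : ZMod n) * c = 0).card = Nat.gcd w n := by
  set d := Nat.gcd w n with hd
  have hdn : d ∣ n := Nat.gcd_dvd_right w n
  have hdw : d ∣ w := Nat.gcd_dvd_left w n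
  have hn0 : 0 < n := Nat.pos_of_ne_zero (NeZero.ne n)
  have hd0 : 0 < d := Nat.gcd_pos_of_pos_right w hn0
  have hmul : d * (n / d) = n := Nat.mul_div_cancel' hdn
  have hnd0 : 0 < n / d := Nat.div_pos (Nat.le_of_dvd hn0 hdn) hd0
  have hcop : Nat.Coprime (w / d) (n / d) := Nat.coprime_div_gcd_div_gcd hd0
  have heq : w = d * (w / d) := (Nat.mul_div_cancel' hdw).symm
  rw [← Finset.card_range d]
  refine Finset.card_bij' (fun c _ => c.val / (n / d))
    (fun j _ => ((j * (n / d) : ℕ) : ZMod n)) ?_ ?_ ?_ ?_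
  · -- hi : maps into range d
    intro c _
    rw [Finset.mem_range, Nat.div_lt_iff_lt_mul hnd0, hmul]
    exact ZMod.val_lt c
  · -- hj : maps into filter
    intro j _
    refine Finset.mem_filter.mpr ⟨Finset.mem_univ _, ?_⟩
    have h0 : ((w * (j * (n / d)) : ℕ) : ZMod n) = 0 := by
      rw [ZMod.natCast_eq_zero_iff]
      refine ⟨w / d * j, ?_⟩
      calc w * (j * (n / d)) = d * (w / d) * (j * (n / d)) := by rw [← heq]
        _ = d * (n / d) * (w / d * j) := by ring
        _ = n * (w / d * j) := by rw [hmul]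
    push_cast at h0 ⊢
    linear_combination h0
  · -- left inverse
    intro c hc
    have hc' : (w : ZMod n) * c = 0 := (Finset.mem_filter.mp hc).2
    have hdvd : n ∣ w * c.val := by
      rw [← ZMod.natCast_eq_zero_iff]
      push_cast
      rw [ZMod.natCast_zmod_val]
      exact hc'
    have hnd : (n / d) ∣ c.val := by
      have heq2 : w * c.val = d * ((w / d) * c.val) := by
        rw [← Nat.mul_assoc, ← heq]
      have h1 : d * (n / d) ∣ d * ((w / d) * c.val) := by
        rw [hmul, ← heq2]; exact hdvd
      have h2 : (n / d) ∣ (w / d) * c.val := (mul_dvd_mul_iff_left hd0.ne').mp h1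
      exact (Nat.Coprime.symm hcop).dvd_of_dvd_mul_left h2
    show (((c.val / (n / d)) * (n / d) : ℕ) : ZMod n) = c
    rw [Nat.div_mul_cancel hnd, ZMod.natCast_zmod_val]
  · -- right inverse
    intro j hj
    have hj' : j < d := Finset.mem_range.mp hj
    have hlt : j * (n / d) < n := by
      calc j * (n / d) < d * (n / d) := (Nat.mul_lt_mul_right hnd0).mpr hj'
        _ = n := hmul
    show (((j * (n / d) : ℕ) : ZMod n)).val / (n / d) = j
    rw [ZMod.val_cast_of_lt hlt, Nat.mul_div_cancel j hnd0]

lemma mem_solSet {w L : ℕ} {y : Fin (L + 1) → ZMod n} :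
    y ∈ solSet n w L ↔
      ((w : ZMod n) * y 0 + ∑ i : Fin L, y i.succ = 0) ∧ Function.Injective y := by
  simp [solSet]

lemma solSet_zero (w : ℕ) : (solSet n w 0).card = Nat.gcd w n := by
  rw [← ker_card n w]
  refine Finset.card_bij' (fun y _ => y 0) (fun c _ => fun _ => c) ?_ ?_ ?_ ?_
  · intro y hy
    have := ((mem_solSet n).mp hy).1
    simp only [Finset.univ_eq_empty, Finset.sum_empty, add_zero] at this
    exact Finset.mem_filter.mpr ⟨Finset.mem_univ _, this⟩
  · intro c hc
    refine (mem_solSet n).mpr ⟨?_, ?_⟩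
    · simpa using (Finset.mem_filter.mp hc).2
    · intro a b _; rw [Fin.eq_zero a, Fin.eq_zero b]
  · intro y _
    funext i
    show y 0 = y i
    rw [Fin.eq_zero i]
  · intro c _
    rfl

lemma solSet_rec (w L : ℕ) (hw : Nat.Coprime w n) :
    (solSet n w (L + 1)).card + (L + 1) * (solSet n (w + 1) L).card
      = n.descFactorial (L + 1) := by
  classical
  have hu : IsUnit ((w : ZMod n)) := (ZMod.isUnit_iff_coprime w n).mpr hw
  set c : (Fin (L + 1) → ZMod n) → ZMod n :=
    fun z => -(((w : ZMod n))⁻¹ * ∑ i, z i) with hc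
  have fact1 : ∀ z : Fin (L + 1) → ZMod n, (w : ZMod n) * c z + ∑ i, z i = 0 := by
    intro z
    simp only [hc, mul_neg, ← mul_assoc, ZMod.mul_inv_of_unit _ hu, one_mul]
    ring
  have fact2 : ∀ (z : Fin (L + 1) → ZMod n) (y0 : ZMod n),
      (w : ZMod n) * y0 + ∑ i, z i = 0 → y0 = c z := by
    intro z y0 h0
    have h1 : (w : ZMod n) * y0 = -(∑ i, z i) := by linear_combination h0
    calc y0 = ((w : ZMod n))⁻¹ * ((w : ZMod n) * y0) := by
            rw [← mul_assoc, ZMod.inv_mul_of_unit _ hu, one_mul]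
      _ = c z := by rw [h1, hc]; ring
  have key : ∀ u : Fin (L + 1) → ZMod n,
      (((w + 1 : ℕ)) : ZMod n) * u 0 + ∑ i : Fin L, u i.succ = 0
        ↔ (w : ZMod n) * u 0 + ∑ i, u i = 0 := by
    intro u
    rw [Fin.sum_univ_succ]
    push_cast
    constructor <;> intro h' <;> linear_combination h'
  have hTcard : (Finset.univ.filter fun z : Fin (L + 1) → ZMod n =>
      Function.Injective z).card = n.descFactorial (L + 1) := by
    have h1 : (Finset.univ.filter fun z : Fin (L + 1) → ZMod n =>
        Function.Injective z).card
        = Fintype.card {z : Fin (L + 1) → ZMod n // Function.Injective z} :=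
      (Fintype.card_subtype _).symm
    rw [h1, Fintype.card_congr (Equiv.subtypeInjectiveEquivEmbedding _ _),
      Fintype.card_embedding_eq, ZMod.card, Fintype.card_fin]
  have hsplit := Finset.card_filter_add_card_filter_not
    (s := Finset.univ.filter fun z : Fin (L + 1) → ZMod n => Function.Injective z)
    (p := fun z => ∃ i, z i = c z)
  -- membership characterizations
  have memT1 : ∀ z : Fin (L + 1) → ZMod n,
      z ∈ ((Finset.univ.filter fun z : Fin (L + 1) → ZMod n =>
        Function.Injective z).filter fun z => ∃ i, z i = c z)
      ↔ Function.Injective z ∧ ∃ i, z i = c z := by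
    intro z; simp [Finset.mem_filter, and_assoc]
  have memT0 : ∀ z : Fin (L + 1) → ZMod n,
      z ∈ ((Finset.univ.filter fun z : Fin (L + 1) → ZMod n =>
        Function.Injective z).filter fun z => ¬∃ i, z i = c z)
      ↔ Function.Injective z ∧ ¬∃ i, z i = c z := by
    intro z; simp [Finset.mem_filter, and_assoc]
  -- T0 : bijective with solSet n w (L+1)
  have h0 : (solSet n w (L + 1)).card
      = ((Finset.univ.filter fun z : Fin (L + 1) → ZMod n =>
        Function.Injective z).filter fun z => ¬∃ i, z i = c z).card := by
    refine Finset.card_bij' (fun y _ => Fin.tail y) (fun z _ => Fin.cons (c z) z)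
      ?_ ?_ ?_ ?_
    · intro y hy
      obtain ⟨hsum, hinj⟩ := (mem_solSet n).mp hy
      have htail : Function.Injective (Fin.tail y) :=
        fun a b hab => Fin.succ_injective _ (hinj hab)
      have hy0 : y 0 = c (Fin.tail y) := fact2 (Fin.tail y) (y 0) hsum
      refine (memT0 _).mpr ⟨htail, ?_⟩
      intro hcon
      obtain ⟨i, hi⟩ := hcon
      have : y i.succ = y 0 := by rw [← hy0] at hi; exact hi
      exact Fin.succ_ne_zero i (hinj this)
    · intro z hz
      obtain ⟨hzinj, hznot⟩ := (memT0 _).mp hz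
      have hcr : c z ∉ Set.range z := by
        rintro ⟨i, hi⟩; exact hznot ⟨i, hi⟩
      refine (mem_solSet n).mpr ⟨?_, ?_⟩
      · simp only [Fin.cons_zero, Fin.cons_succ]
        exact fact1 z
      · exact Fin.cons_injective_of_injective hcr hzinj
    · intro y hy
      obtain ⟨hsum, _⟩ := (mem_solSet n).mp hy
      have hy0 : y 0 = c (Fin.tail y) := fact2 (Fin.tail y) (y 0) hsum
      show Fin.cons (c (Fin.tail y)) (Fin.tail y) = y
      rw [← hy0, Fin.cons_self_tail]
    · intro z _
      exact Fin.tail_cons _ _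
  -- T1 : bijective with Fin (L+1) × solSet n (w+1) L
  have h1 : ((Finset.univ.filter fun z : Fin (L + 1) → ZMod n =>
        Function.Injective z).filter fun z => ∃ i, z i = c z).card
      = ((Finset.univ : Finset (Fin (L + 1))) ×ˢ solSet n (w + 1) L).card := by
    refine Finset.card_bij'
      (fun z hz => ((((memT1 z).mp hz).2).choose,
        z ∘ Equiv.swap 0 (((memT1 z).mp hz).2).choose))
      (fun p _ => p.2 ∘ Equiv.swap 0 p.1) ?_ ?_ ?_ ?_
    · intro z hz
      obtain ⟨hzinj, hex⟩ := (memT1 z).mp hz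
      have hspec : z (((memT1 z).mp hz).2).choose = c z :=
        (((memT1 z).mp hz).2).choose_spec
      set a := (((memT1 z).mp hz).2).choose with ha
      refine Finset.mem_product.mpr ⟨Finset.mem_univ _, ?_⟩
      refine (mem_solSet n).mpr ⟨?_, hzinj.comp (Equiv.injective _)⟩
      refine (key _).mpr ?_
      show (w : ZMod n) * (z ∘ Equiv.swap 0 a) 0 + ∑ i, (z ∘ Equiv.swap 0 a) i = 0
      have hsum : ∑ i, (z ∘ Equiv.swap 0 a) i = ∑ i, z i := Equiv.sum_comp _ z
      have h00 : (z ∘ Equiv.swap 0 a) 0 = z a := by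
        simp [Equiv.swap_apply_left]
      rw [hsum, h00, hspec]
      exact fact1 z
    · intro p hp
      obtain ⟨-, hp2⟩ := Finset.mem_product.mp hp
      obtain ⟨hsum, hinj⟩ := (mem_solSet n).mp hp2
      replace hsum := (key _).mp hsum
      have hzinj : Function.Injective (p.2 ∘ Equiv.swap 0 p.1) :=
        hinj.comp (Equiv.injective _)
      refine (memT1 _).mpr ⟨hzinj, ⟨p.1, ?_⟩⟩
      show (p.2 ∘ Equiv.swap 0 p.1) p.1 = c (p.2 ∘ Equiv.swap 0 p.1)
      have hsum2 : ∑ i, (p.2 ∘ Equiv.swap 0 p.1) i = ∑ i, p.2 i := Equiv.sum_comp _ p.2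
      have h02 : (p.2 ∘ Equiv.swap 0 p.1) p.1 = p.2 0 := by
        simp [Equiv.swap_apply_right]
      rw [h02]
      apply fact2
      rw [hsum2]
      exact hsum
    · -- left inverse : z → pair → z
      intro z hz
      funext x
      simp [Equiv.swap_apply_self]
    · -- right inverse : pair → z → pair
      intro p hp
      obtain ⟨-, hp2⟩ := Finset.mem_product.mp hp
      obtain ⟨hsum, hinj⟩ := (mem_solSet n).mp hp2
      replace hsum := (key _).mp hsum
      have hzinj : Function.Injective (p.2 ∘ Equiv.swap 0 p.1) :=
        hinj.comp (Equiv.injective _)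
      have hza : (p.2 ∘ Equiv.swap 0 p.1) p.1 = c (p.2 ∘ Equiv.swap 0 p.1) := by
        have hsum2 : ∑ i, (p.2 ∘ Equiv.swap 0 p.1) i = ∑ i, p.2 i := Equiv.sum_comp _ p.2
        have h02 : (p.2 ∘ Equiv.swap 0 p.1) p.1 = p.2 0 := by
          simp [Equiv.swap_apply_right]
        rw [h02]; apply fact2; rw [hsum2]; exact hsum
      have hzmem : (p.2 ∘ Equiv.swap 0 p.1) ∈
          ((Finset.univ.filter fun z : Fin (L + 1) → ZMod n =>
            Function.Injective z).filter fun z => ∃ i, z i = c z) :=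
        (memT1 _).mpr ⟨hzinj, ⟨p.1, hza⟩⟩
      set z := p.2 ∘ Equiv.swap 0 p.1 with hzdef
      have hchoice : (((memT1 z).mp hzmem).2).choose = p.1 :=
        hzinj ((((memT1 z).mp hzmem).2).choose_spec.trans hza.symm)
      show ((((memT1 z).mp hzmem).2).choose,
        z ∘ Equiv.swap 0 (((memT1 z).mp hzmem).2).choose) = p
      rw [hchoice]
      have hzz : z ∘ Equiv.swap 0 p.1 = p.2 := by
        funext x
        simp [hzdef, Equiv.swap_apply_self]
      rw [hzz]
  have hprod : ((Finset.univ : Finset (Fin (L + 1))) ×ˢ solSet n (w + 1) L).card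
      = (L + 1) * (solSet n (w + 1) L).card := by
    rw [Finset.card_product, Finset.card_univ, Fintype.card_fin]
  rw [h0, ← hTcard, ← hsplit, h1, hprod]
  exact Nat.add_comm _ _

lemma descFactorial_cast_s6 (M : ℕ) :
    (n.descFactorial M : ℤ) = ∏ j ∈ Finset.range M, ((n : ℤ) - j) := by
  induction M with
  | zero => simp
  | succ M ih =>
    rw [Nat.descFactorial_succ, Finset.prod_range_succ, Nat.cast_mul, ih]
    rcases le_or_gt M n with hMn | hMn
    · rw [Nat.cast_sub hMn]
      ring
    · have h1 : n - M = 0 := by omega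
      have h2 : (∏ j ∈ Finset.range M, ((n : ℤ) - j)) = 0 :=
        Finset.prod_eq_zero (Finset.mem_range.mpr hMn) (by simp)
      rw [h1, h2]
      ring

lemma solSet_closed (m : ℕ) (h : ∀ j : ℕ, 1 ≤ j → j ≤ m → Nat.gcd j n = 1) :
    ∀ L w : ℕ, 1 ≤ w → w + L = m + 1 →
      ((solSet n w L).card : ℤ) =
        (-1) ^ L * (Nat.factorial L : ℤ) * ((Nat.gcd (m + 1) n : ℤ) - 1) +
          ∏ j ∈ Finset.range L, ((n : ℤ) - (j + 1)) := by
  intro L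
  induction L with
  | zero =>
    intro w hw1 hwm
    have hwm1 : w = m + 1 := by omega
    subst hwm1
    rw [solSet_zero]
    simp
  | succ L ih =>
    intro w hw1 hwm
    have hcop : Nat.Coprime w n := h w hw1 (by omega)
    have hrec := solSet_rec n w L hcop
    have ih' := ih (w + 1) (by omega) (by omega)
    have hcast := congrArg (Nat.cast : ℕ → ℤ) hrec
    push_cast at hcast
    rw [ih'] at hcast
    have hdf : ((n.descFactorial (L + 1) : ℕ) : ℤ)
        = (n : ℤ) * ∏ j ∈ Finset.range L, ((n : ℤ) - (j + 1)) := by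
      rw [descFactorial_cast_s6, Finset.prod_range_succ']
      push_cast
      ring
    rw [hdf] at hcast
    rw [Finset.prod_range_succ, Nat.factorial_succ]
    push_cast
    linear_combination hcast

end aux

theorem stmt_6 (k n : ℕ) (hn : 1 ≤ n) (hk : 1 ≤ k)
    (h : ∀ j : ℕ, 1 ≤ j → j ≤ k - 1 → Nat.gcd j n = 1) :
    (Nat.card {x : Fin k → ZMod n //
        ∑ i, x i = 0 ∧ Function.Injective x} : ℤ) =
      (-1) ^ (k - 1) * (Nat.factorial (k - 1) : ℤ) * ((Nat.gcd k n : ℤ) - 1) +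
        ∏ j ∈ Finset.range (k - 1), ((n : ℤ) - (j + 1)) := by
  haveI : NeZero n := ⟨by omega⟩
  obtain ⟨m, rfl⟩ : ∃ m, k = m + 1 := ⟨k - 1, by omega⟩
  simp only [Nat.add_sub_cancel] at h ⊢
  have hA : Nat.card {x : Fin (m + 1) → ZMod n //
      ∑ i, x i = 0 ∧ Function.Injective x} = (solSet n 1 m).card := by
    rw [Nat.card_eq_fintype_card, Fintype.card_subtype]
    refine Finset.card_bij' (fun x _ => x) (fun x _ => x) ?_ ?_
      (fun _ _ => rfl) (fun _ _ => rfl)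
    · intro x hx
      obtain ⟨h1, h2⟩ := (Finset.mem_filter.mp hx).2
      refine (mem_solSet n).mpr ⟨?_, h2⟩
      rw [Fin.sum_univ_succ] at h1
      rw [Nat.cast_one, one_mul]
      exact h1
    · intro x hx
      obtain ⟨h1, h2⟩ := (mem_solSet n).mp hx
      refine Finset.mem_filter.mpr ⟨Finset.mem_univ _, ⟨?_, h2⟩⟩
      rw [Nat.cast_one, one_mul] at h1
      rw [Fin.sum_univ_succ]
      exact h1
  rw [hA]
  exact solSet_closed n m h m 1 le_rfl (Nat.add_comm 1 m)
end

section
/- Let g(c, e, k) denote the number of simple graphs with c connected components and e edges on k labeled vertices. For every positive integer n and every k ≥ 1, ∑_{e=0}^{C(k,2)} ∑_{c=1}^{k} (-1)^e n^c g(c,e,k) = n(n-1)···(n-k+1). -/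
/-!
Write `n ^ c(G)` as the number of colourings `f : Fin k → Fin n` that are constant on the
components of `G`, i.e. with `G ≤ fiberGraph f`, where `fiberGraph f` joins distinct vertices
of the same colour. Exchanging the sums, the left side becomes
`∑ f, ∑ G ≤ fiberGraph f, (-1) ^ e(G)`, and the inner sum is the alternating sum over all
subsets of the edges of `fiberGraph f`: it vanishes unless that graph is empty, i.e. unless
`f` is injective. There are `n (n - 1) ⋯ (n - k + 1)` injective colourings.
-/

/-- Number of simple graphs with `c` connected components and `e` edges on `k`
labeled vertices. -/
noncomputable def gcount (c e k : ℕ) : ℕ :=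
  Nat.card {G : SimpleGraph (Fin k) //
    Nat.card G.ConnectedComponent = c ∧ Nat.card G.edgeSet = e}

open Finset Function

namespace SimpleGraph

variable {V α : Type*}

def fiberGraph (f : V → α) : SimpleGraph V where
  Adj v w := v ≠ w ∧ f v = f w
  symm := ⟨fun _ _ h => ⟨h.1.symm, h.2.symm⟩⟩
  loopless := ⟨fun _ h => h.1 rfl⟩

@[simp]
theorem fiberGraph_adj {f : V → α} {v w : V} :
    (fiberGraph f).Adj v w ↔ v ≠ w ∧ f v = f w :=
  Iff.rfl

theorem le_fiberGraph_iff {G : SimpleGraph V} {f : V → α} :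
    G ≤ fiberGraph f ↔ ∀ ⦃v w⦄, G.Adj v w → f v = f w :=
  ⟨fun h _ _ hvw => (fiberGraph_adj.1 (h hvw)).2, fun h _ _ hvw => ⟨hvw.ne, h hvw⟩⟩

theorem fiberGraph_eq_bot_iff {f : V → α} : fiberGraph f = ⊥ ↔ Injective f := by
  simp only [eq_bot_iff_forall_not_adj, fiberGraph_adj, not_and, not_imp_not, Injective]

theorem Reachable.eq_of_le_fiberGraph {G : SimpleGraph V} {f : V → α} (hG : G ≤ fiberGraph f)
    {v w : V} (h : G.Reachable v w) : f v = f w := by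
  obtain ⟨p⟩ := h
  induction p with
  | nil => rfl
  | cons hadj _ ih => exact (le_fiberGraph_iff.1 hG hadj).trans ih

def leFiberGraphEquiv (G : SimpleGraph V) :
    {f : V → α // G ≤ fiberGraph f} ≃ (G.ConnectedComponent → α) where
  toFun f := Quot.lift f.1 fun _ _ => Reachable.eq_of_le_fiberGraph f.2
  invFun g := ⟨g ∘ G.connectedComponentMk,
    le_fiberGraph_iff.2 fun _ _ h =>
      congrArg g (ConnectedComponent.connectedComponentMk_eq_of_adj h)⟩
  left_inv _ := rfl
  right_inv _ := funext fun c => Quot.inductionOn c fun _ => rfl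

theorem card_subtype_le_fiberGraph [Finite V] (G : SimpleGraph V) :
    Nat.card {f : V → α // G ≤ fiberGraph f} =
      Nat.card α ^ Nat.card G.ConnectedComponent := by
  rw [Nat.card_congr (leFiberGraphEquiv G), Nat.card_fun]

theorem sum_le_neg_one_pow_card_edgeSet [Fintype V] [DecidableEq V] (H : SimpleGraph V)
    [DecidablePred (· ≤ H)] [Decidable (H = ⊥)] :
    ∑ G ∈ {G | G ≤ H}, (-1 : ℤ) ^ Nat.card G.edgeSet = if H = ⊥ then 1 else 0 := by
  classical
  calc ∑ G ∈ {G | G ≤ H}, (-1 : ℤ) ^ Nat.card G.edgeSet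
      = ∑ S ∈ H.edgeFinset.powerset, (-1 : ℤ) ^ #S := by
        refine sum_nbij' (fun G => G.edgeFinset) (fun S => fromEdgeSet S) ?_ ?_ ?_ ?_ ?_
        · intro G hG
          simpa using hG
        · intro S hS
          rw [mem_powerset, ← coe_subset, coe_edgeFinset] at hS
          simpa using (fromEdgeSet_mono hS).trans (fromEdgeSet_edgeSet H).le
        · intro G _
          simp
        · intro S hS
          rw [mem_powerset, ← coe_subset, coe_edgeFinset] at hS
          rw [← coe_inj, coe_edgeFinset, edgeSet_eq_iff]
          exact ⟨rfl, Set.subset_compl_iff_disjoint_right.1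
            (hS.trans H.edgeSet_subset_compl_diagSet)⟩
        · intro G _
          rw [Nat.card_eq_fintype_card, card_edgeSet]
    _ = if H = ⊥ then 1 else 0 := by
        simp [sum_powerset_neg_one_pow_card]

theorem card_edgeSet_le_choose_two [Fintype V] (G : SimpleGraph V) :
    Nat.card G.edgeSet ≤ (Fintype.card V).choose 2 := by
  classical
  rw [Nat.card_eq_fintype_card, card_edgeSet]
  exact G.card_edgeFinset_le_card_choose_two

theorem card_connectedComponent_le [Finite V] (G : SimpleGraph V) :
    Nat.card G.ConnectedComponent ≤ Nat.card V :=
  Nat.card_le_card_of_surjective _ fun c => c.exists_rep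

theorem card_connectedComponent_pos [Finite V] [Nonempty V] (G : SimpleGraph V) :
    0 < Nat.card G.ConnectedComponent :=
  have : Nonempty G.ConnectedComponent := ⟨G.connectedComponentMk (Classical.arbitrary V)⟩
  Nat.card_pos

end SimpleGraph

open SimpleGraph

theorem sum_sum_mul_gcount {k : ℕ} (hk : 1 ≤ k) (w : ℕ → ℕ → ℤ) :
    ∑ e ∈ range (k.choose 2 + 1), ∑ c ∈ Icc 1 k, w e c * gcount c e k =
      ∑ G : SimpleGraph (Fin k), w (Nat.card G.edgeSet) (Nat.card G.ConnectedComponent) := by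
  classical
  have : Nonempty (Fin k) := ⟨⟨0, hk⟩⟩
  have hg : ∀ c e, (gcount c e k : ℤ) = ∑ G : SimpleGraph (Fin k),
      if (Nat.card G.edgeSet, Nat.card G.ConnectedComponent) = (e, c) then 1 else 0 := by
    intro c e
    simp [gcount, Nat.card_eq_fintype_card, Fintype.card_subtype, and_comm]
  have hmem : ∀ G : SimpleGraph (Fin k), (Nat.card G.edgeSet, Nat.card G.ConnectedComponent) ∈
      range (k.choose 2 + 1) ×ˢ Icc 1 k := by
    intro G
    have hE := G.card_edgeSet_le_choose_two
    have hC := G.card_connectedComponent_le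
    have hC' := G.card_connectedComponent_pos
    rw [Fintype.card_fin] at hE
    rw [Nat.card_fin] at hC
    simp only [mem_product, mem_range, mem_Icc]
    omega
  symm
  calc ∑ G : SimpleGraph (Fin k), w (Nat.card G.edgeSet) (Nat.card G.ConnectedComponent)
      = ∑ G : SimpleGraph (Fin k), ∑ p ∈ range (k.choose 2 + 1) ×ˢ Icc 1 k,
          if (Nat.card G.edgeSet, Nat.card G.ConnectedComponent) = p then w p.1 p.2 else 0 :=
        sum_congr rfl fun G _ => by rw [sum_ite_eq, if_pos (hmem G)]
    _ = _ := by
      rw [sum_comm, sum_product]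
      simp_rw [hg, mul_sum, mul_ite, mul_one, mul_zero]

theorem stmt_8_general (n k : ℕ) (hk : 1 ≤ k) :
    ∑ e ∈ Finset.range (k.choose 2 + 1), ∑ c ∈ Finset.Icc 1 k,
        (-1 : ℤ) ^ e * (n : ℤ) ^ c * gcount c e k =
      ∏ j ∈ Finset.range k, ((n : ℤ) - j) := by
  classical
  have hcount : ∀ G : SimpleGraph (Fin k),
      (n : ℤ) ^ Nat.card G.ConnectedComponent = #{f : Fin k → Fin n | G ≤ fiberGraph f} := by
    intro G
    rw [← Fintype.card_subtype, ← Nat.card_eq_fintype_card, card_subtype_le_fiberGraph,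
      Nat.card_fin, Nat.cast_pow]
  calc _ = ∑ G : SimpleGraph (Fin k),
        (-1 : ℤ) ^ Nat.card G.edgeSet * (n : ℤ) ^ Nat.card G.ConnectedComponent :=
        sum_sum_mul_gcount hk fun e c => (-1 : ℤ) ^ e * (n : ℤ) ^ c
    _ = ∑ f : Fin k → Fin n, ∑ G ∈ {G | G ≤ fiberGraph f},
          (-1 : ℤ) ^ Nat.card G.edgeSet := by
        simp_rw [hcount, sum_filter, card_filter, Nat.cast_sum, mul_sum, Nat.cast_ite, mul_ite,
          Nat.cast_one, Nat.cast_zero, mul_one, mul_zero]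
        exact sum_comm
    _ = #{f : Fin k → Fin n | Injective f} := by
        simp only [sum_le_neg_one_pow_card_edgeSet, fiberGraph_eq_bot_iff, sum_boole]
    _ = n.descFactorial k := by
        rw [← Fintype.card_subtype,
          Fintype.card_congr (Equiv.subtypeInjectiveEquivEmbedding _ _),
          Fintype.card_embedding_eq, Fintype.card_fin, Fintype.card_fin]
    _ = ∏ j ∈ range k, ((n : ℤ) - j) := by
        rw [← descPochhammer_eval_eq_descFactorial, descPochhammer_eval_eq_prod_range]

theorem stmt_8 (n k : ℕ) (hn : 1 ≤ n) (hk : 1 ≤ k) :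
    ∑ e ∈ Finset.range (k.choose 2 + 1), ∑ c ∈ Finset.Icc 1 k,
        (-1 : ℤ) ^ e * (n : ℤ) ^ c * gcount c e k =
      ∏ j ∈ Finset.range k, ((n : ℤ) - j) :=
  stmt_8_general n k hk
end

section
/- Let n ≥ 1, k ≥ 1 be integers and b, a_1,...,a_k integers with gcd(∑_{i∈I} a_i, n) = 1 for all nonempty proper subsets I of {1,...,k}. For any set S of unordered pairs from {1,...,k}, let N(S) be the number of solutions (x_1,...,x_k) ∈ (Z/nZ)^k of a_1x_1 + ... + a_kx_k ≡ b (mod n) satisfying x_u = x_v for every {u,v} ∈ S. If the graph on vertices {1,...,k} with edge set S has c ≥ 2 connected components, then N(S) = n^{c-1}. -/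
/-! A solution that is constant along the edges of `G` is a function of the connected component,
so the equation becomes `∑_C (∑_{v ∈ C} a_v) y_C = b`, with one unknown per component. With at
least two components, any one component is a proper nonempty vertex set, so its coefficient is a
unit mod `n`; solving for its unknown, the other `c - 1` unknowns are free. -/

open Finset

theorem Nat.card_linear_eq_of_isUnit {α R : Type*} [Fintype α] [Ring R]
    (u : α → R) (b : R) {i₀ : α} (hu : IsUnit (u i₀)) :
    Nat.card {y : α → R // ∑ i, u i * y i = b} = Nat.card R ^ (Fintype.card α - 1) := by
  classical
  have hsplit (y : α → R) :
      ∑ i, u i * y i = u i₀ * y i₀ + ∑ j : {i // i ≠ i₀}, u j * y j :=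
    Fintype.sum_eq_add_sum_subtype_ne _ i₀
  let restrict (y : {y : α → R // ∑ i, u i * y i = b}) : {i // i ≠ i₀} → R := fun j ↦ y.1 j
  have hbij : Function.Bijective restrict := by
    constructor
    · rintro ⟨y, hy⟩ ⟨y', hy'⟩ h
      have hoff (j : {i // i ≠ i₀}) : y j = y' j := congrFun h j
      have hi₀ : y i₀ = y' i₀ := by
        rw [hsplit, Fintype.sum_congr _ _ fun j ↦ by rw [hoff j], ← hy', hsplit] at hy
        exact hu.mul_left_cancel (add_right_cancel hy)
      ext i
      by_cases hi : i = i₀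
      · exact hi ▸ hi₀
      · exact hoff ⟨i, hi⟩
    · intro z
      let y (i : α) : R :=
        if h : i = i₀ then ↑hu.unit⁻¹ * (b - ∑ j : {i // i ≠ i₀}, u j * z j) else z ⟨i, h⟩
      refine ⟨⟨y, ?_⟩, funext fun j ↦ dif_neg j.2⟩
      have hoff : ∑ j : {i // i ≠ i₀}, u j.1 * y j.1 = ∑ j : {i // i ≠ i₀}, u j.1 * z j :=
        Fintype.sum_congr _ _ fun j ↦ by simp only [y, dif_neg j.2]
      rw [hsplit, hoff]
      simp only [y, dif_pos, ← mul_assoc, hu.mul_val_inv, one_mul, sub_add_cancel]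
  rw [Nat.card_eq_of_bijective restrict hbij, Nat.card_fun,
    Nat.card_eq_fintype_card (α := {i // i ≠ i₀}), Fintype.card_subtype_compl,
    Fintype.card_subtype_eq]

theorem Finset.sum_mul_comp_eq_sum_fiberwise {ι κ R : Type*} [Fintype ι] [Fintype κ]
    [DecidableEq κ] [NonUnitalNonAssocSemiring R] (p : ι → κ) (a : ι → R) (y : κ → R) :
    ∑ i, a i * y (p i) = ∑ j, (∑ i with p i = j, a i) * y j := by
  rw [← sum_fiberwise univ p]
  refine sum_congr rfl fun j _ ↦ ?_
  rw [sum_mul]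
  exact sum_congr rfl fun i hi ↦ by rw [(mem_filter.1 hi).2]

namespace SimpleGraph

variable {V : Type*} {G : SimpleGraph V}

theorem Reachable.eq_of_forall_adj {β : Sort*} {x : V → β}
    (hx : ∀ u v, G.Adj u v → x u = x v) {u v : V} (h : G.Reachable u v) : x u = x v := by
  obtain ⟨p⟩ := h
  induction p with
  | nil => rfl
  | cons hadj _ ih => exact (hx _ _ hadj).trans ih

theorem exists_comp_connectedComponentMk {β : Sort*} {x : V → β}
    (hx : ∀ u v, G.Adj u v → x u = x v) :
    ∃ y : G.ConnectedComponent → β, y ∘ G.connectedComponentMk = x :=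
  ⟨ConnectedComponent.lift x fun _ _ p _ ↦ p.reachable.eq_of_forall_adj hx, rfl⟩

theorem connectedComponentMk_surjective : Function.Surjective G.connectedComponentMk :=
  fun C ↦ C.exists_rep

theorem card_linear_eq_of_forall_adj {R : Type*} [Fintype V] [Ring R]
    [Fintype G.ConnectedComponent] [DecidableEq G.ConnectedComponent]
    (a : V → R) (b : R) {C₀ : G.ConnectedComponent}
    (hC₀ : IsUnit (∑ v with G.connectedComponentMk v = C₀, a v)) :
    Nat.card {x : V → R // ∑ v, a v * x v = b ∧ ∀ u v, G.Adj u v → x u = x v} =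
      Nat.card R ^ (Nat.card G.ConnectedComponent - 1) := by
  let A (C : G.ConnectedComponent) : R := ∑ v with G.connectedComponentMk v = C, a v
  let pullback (y : {y : G.ConnectedComponent → R // ∑ C, A C * y C = b}) :
      {x : V → R // ∑ v, a v * x v = b ∧ ∀ u v, G.Adj u v → x u = x v} :=
    ⟨y.1 ∘ G.connectedComponentMk,
      (sum_mul_comp_eq_sum_fiberwise _ a y.1).trans y.2,
      fun _ _ h ↦ congrArg y.1 (ConnectedComponent.connectedComponentMk_eq_of_adj h)⟩
  have hbij : Function.Bijective pullback := by
    constructor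
    · intro y y' h
      exact Subtype.ext (connectedComponentMk_surjective.injective_comp_right
        (congrArg Subtype.val h))
    · rintro ⟨x, hxb, hadj⟩
      obtain ⟨y, rfl⟩ := exists_comp_connectedComponentMk hadj
      exact ⟨⟨y, (sum_mul_comp_eq_sum_fiberwise _ a y).symm.trans hxb⟩, rfl⟩
  rw [← Nat.card_eq_of_bijective pullback hbij, Nat.card_linear_eq_of_isUnit A b hC₀,
    Nat.card_eq_fintype_card (α := G.ConnectedComponent)]

end SimpleGraph

theorem stmt_11_general (k n : ℕ) (a : Fin k → ℤ) (b : ℤ)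
    (hI : ∀ I : Finset (Fin k), I.Nonempty → I ≠ Finset.univ →
      Int.gcd (∑ i ∈ I, a i) n = 1)
    (G : SimpleGraph (Fin k)) (c : ℕ) (hc : Nat.card G.ConnectedComponent = c)
    (hc2 : 2 ≤ c) :
    Nat.card {x : Fin k → ZMod n //
        ∑ i, (a i : ZMod n) * x i = (b : ZMod n) ∧
          ∀ u v : Fin k, G.Adj u v → x u = x v} = n ^ (c - 1) := by
  classical
  have hnontriv : Nontrivial G.ConnectedComponent :=
    Finite.one_lt_card_iff_nontrivial.1 (by omega)
  obtain ⟨C₀, C₁, hC⟩ := hnontriv.exists_pair_ne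
  obtain ⟨v₀, rfl⟩ := C₀.exists_rep
  obtain ⟨v₁, rfl⟩ := C₁.exists_rep
  set I : Finset (Fin k) := {v | G.connectedComponentMk v = G.connectedComponentMk v₀}
  have hI_nonempty : I.Nonempty := ⟨v₀, by simp [I]⟩
  have hI_ne_univ : I ≠ univ := fun h ↦ hC (mem_filter.1 (h ▸ mem_univ v₁)).2.symm
  have hcop : IsCoprime (∑ i ∈ I, a i) n :=
    Int.isCoprime_iff_gcd_eq_one.2 (hI I hI_nonempty hI_ne_univ)
  have hunit : IsUnit (∑ i ∈ I, (a i : ZMod n)) := by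
    rw [← Int.cast_sum]
    exact IsUnit.of_mul_eq_one _ (ZMod.coe_int_mul_inv_eq_one hcop)
  have : Fintype G.ConnectedComponent := Fintype.ofFinite _
  rw [G.card_linear_eq_of_forall_adj _ _ hunit, Nat.card_zmod, hc]

theorem stmt_11 (k n : ℕ) (hn : 1 ≤ n) (hk : 1 ≤ k) (a : Fin k → ℤ) (b : ℤ)
    (hI : ∀ I : Finset (Fin k), I.Nonempty → I ≠ Finset.univ →
      Int.gcd (∑ i ∈ I, a i) n = 1)
    (G : SimpleGraph (Fin k)) (c : ℕ) (hc : Nat.card G.ConnectedComponent = c)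
    (hc2 : 2 ≤ c) :
    Nat.card {x : Fin k → ZMod n //
        ∑ i, (a i : ZMod n) * x i = (b : ZMod n) ∧
          ∀ u v : Fin k, G.Adj u v → x u = x v} = n ^ (c - 1) :=
  stmt_11_general k n a b hI G c hc hc2
end

section
/- Let p be prime and 1 ≤ k ≤ p. The number of k-tuples (x_1,...,x_k) ∈ (Z/pZ)^k with pairwise distinct coordinates and x_1 + ... + x_k ≡ 0 (mod p) equals (-1)^{k-1}(k-1)!(gcd(k,p) - 1) + (p-1)(p-2)···(p-k+1). -/
open Finset Function

private lemma prod_cast_aux (p m : ℕ) (hm : m ≤ p - 1) :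
    ∏ j ∈ Finset.range m, ((p : ℤ) - (j + 1)) = ((p - 1).descFactorial m : ℤ) := by
  rw [Nat.descFactorial_eq_prod_range, Nat.cast_prod]
  refine Finset.prod_congr rfl fun j hj => ?_
  rw [Finset.mem_range] at hj
  have h1 : p - 1 - j = p - (j + 1) := by omega
  rw [h1, Nat.cast_sub (by omega)]
  push_cast
  ring

theorem stmt_15 (p : ℕ) (hp : p.Prime) (k : ℕ) (hk : 1 ≤ k) (hkp : k ≤ p) :
    (Nat.card {x : Fin k → ZMod p //
        ∑ i, x i = 0 ∧ Function.Injective x} : ℤ) =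
      (-1) ^ (k - 1) * (Nat.factorial (k - 1) : ℤ) * ((Nat.gcd k p : ℤ) - 1) +
        ∏ j ∈ Finset.range (k - 1), ((p : ℤ) - (j + 1)) := by
  haveI : Fact p.Prime := ⟨hp⟩
  rcases lt_or_eq_of_le hkp with hlt | heq
  · -- case k < p : sums are equidistributed
    have hk0 : (k : ZMod p) ≠ 0 := by
      rw [Ne, ZMod.natCast_eq_zero_iff]
      intro hdvd
      exact absurd (Nat.le_of_dvd (by omega) hdvd) (by omega)
    set c : ZMod p := (k : ZMod p)⁻¹ with hc
    have hkc : (k : ZMod p) * c = 1 := mul_inv_cancel₀ hk0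
    let e : {x : Fin k → ZMod p // Function.Injective x} ≃
        {x : Fin k → ZMod p // ∑ i, x i = 0 ∧ Function.Injective x} × ZMod p :=
      { toFun := fun x => (⟨fun i => x.1 i - c * ∑ i, x.1 i, by
          constructor
          · rw [Finset.sum_sub_distrib, Finset.sum_const, Finset.card_univ,
              Fintype.card_fin, nsmul_eq_mul]
            rw [← mul_assoc, hkc, one_mul, sub_self]
          · intro a b hab
            exact x.2 (by simpa using hab)⟩, ∑ i, x.1 i)
        invFun := fun y => ⟨fun i => y.1.1 i + c * y.2, by
          intro a b hab
          exact y.1.2.2 (by simpa using hab)⟩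
        left_inv := fun x => by
          apply Subtype.ext
          funext i
          simp
        right_inv := fun y => by
          have hs : ∑ i, (y.1.1 i + c * y.2) = y.2 := by
            rw [Finset.sum_add_distrib, y.1.2.1, Finset.sum_const, Finset.card_univ,
              Fintype.card_fin, nsmul_eq_mul, ← mul_assoc, hkc, one_mul, zero_add]
          ext
          · simp [hs]
          · simpa using hs }
    have h1 : Nat.card {x : Fin k → ZMod p // Function.Injective x} = p.descFactorial k := by
      rw [Nat.card_eq_fintype_card,
        Fintype.card_congr (Equiv.subtypeInjectiveEquivEmbedding (Fin k) (ZMod p)),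
        Fintype.card_embedding_eq, ZMod.card, Fintype.card_fin]
    have h2 : Nat.card {x : Fin k → ZMod p // Function.Injective x} =
        Nat.card {x : Fin k → ZMod p // ∑ i, x i = 0 ∧ Function.Injective x} * p := by
      rw [Nat.card_congr e, Nat.card_prod]
      congr 1
      rw [Nat.card_eq_fintype_card, ZMod.card]
    have h3 : p.descFactorial k = p * (p - 1).descFactorial (k - 1) := by
      obtain ⟨k', rfl⟩ : ∃ k', k = k' + 1 := ⟨k - 1, by clear * - hk; omega⟩
      obtain ⟨p', rfl⟩ : ∃ p', p = p' + 1 := ⟨p - 1, by clear * - hlt; omega⟩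
      simpa using Nat.succ_descFactorial_succ p' k'
    have hN : Nat.card {x : Fin k → ZMod p // ∑ i, x i = 0 ∧ Function.Injective x} =
        (p - 1).descFactorial (k - 1) := by
      have h4 := h1.symm.trans h2
      rw [h3, mul_comm (Nat.card _) p] at h4
      exact (Nat.eq_of_mul_eq_mul_left hp.pos h4.symm)
    have hgcd : Nat.gcd k p = 1 := by
      rw [Nat.gcd_comm]
      apply hp.coprime_iff_not_dvd.mpr
      intro hdvd
      exact absurd (Nat.le_of_dvd (by clear * - hk; omega) hdvd) (by clear * - hlt; omega)
    rw [hN, hgcd, prod_cast_aux p (k - 1) (by clear * - hlt; omega)]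
    push_cast
    ring
  · -- case k = p
    subst heq
    rcases hp.eq_two_or_odd' with h2 | hodd
    · -- k = 2
      subst h2
      have he : IsEmpty {x : Fin 2 → ZMod 2 // ∑ i, x i = 0 ∧ Function.Injective x} := by
        constructor
        rintro ⟨x, hs, hinj⟩
        have ha : x 0 + x 1 = 0 := by simpa [Fin.sum_univ_two] using hs
        have hb : x 1 = -(x 0) := eq_neg_of_add_eq_zero_right ha
        have hd : x 0 = x 1 := by rw [hb, CharTwo.neg_eq]
        exact absurd (hinj hd) (by decide)
      rw [Nat.card_of_isEmpty]
      decide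
    · -- k odd
      have hsumall : ∑ a : ZMod k, a = 0 := by
        have hS : ∑ a : ZMod k, -a = ∑ a : ZMod k, a :=
          Equiv.sum_comp (Equiv.neg (ZMod k)) id
        have hm2 : (2 : ZMod k) * ∑ a : ZMod k, a = 0 := by
          rw [two_mul]
          nth_rewrite 1 [← hS]
          rw [← Finset.sum_add_distrib]
          simp
        have h2ne : (2 : ZMod k) ≠ 0 := by
          have hp3 : 3 ≤ k := by
            obtain ⟨m, hm⟩ := hodd
            have := hp.two_le
            omega
          rw [show ((2 : ZMod k)) = ((2 : ℕ) : ZMod k) by push_cast; ring, Ne,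
            ZMod.natCast_eq_zero_iff]
          intro hdvd
          exact absurd (Nat.le_of_dvd (by omega) hdvd) (by omega)
        exact (mul_eq_zero.mp hm2).resolve_left h2ne
      have hiff : ∀ x : Fin k → ZMod k,
          (∑ i, x i = 0 ∧ Function.Injective x) ↔ Function.Injective x := by
        intro x
        refine ⟨And.right, fun hinj => ⟨?_, hinj⟩⟩
        have hb : Function.Bijective x := by
          rw [Fintype.bijective_iff_injective_and_card]
          exact ⟨hinj, by simp [ZMod.card]⟩
        calc ∑ i, x i = ∑ a : ZMod k, a := Equiv.sum_comp (Equiv.ofBijective x hb) id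
          _ = 0 := hsumall
      have hcard : Nat.card {x : Fin k → ZMod k // ∑ i, x i = 0 ∧ Function.Injective x} =
          k.factorial := by
        rw [Nat.card_congr (Equiv.subtypeEquivRight hiff), Nat.card_eq_fintype_card,
          Fintype.card_congr (Equiv.subtypeInjectiveEquivEmbedding (Fin k) (ZMod k)),
          Fintype.card_embedding_eq, ZMod.card, Fintype.card_fin, Nat.descFactorial_self]
      rw [hcard, Nat.gcd_self, prod_cast_aux k (k - 1) le_rfl, Nat.descFactorial_self]
      have hneg : (-1 : ℤ) ^ (k - 1) = 1 := by
        apply Even.neg_one_pow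
        obtain ⟨m, hm⟩ := hodd
        exact ⟨m, by clear * - hm; omega⟩
      rw [hneg]
      obtain ⟨k', rfl⟩ : ∃ k', k = k' + 1 := ⟨k - 1, by clear * - hk; omega⟩
      simp only [Nat.add_sub_cancel]
      push_cast [Nat.factorial_succ]
      ring
end

section
/- For every prime p and integers a_1,...,a_k satisfying p | (a_1 + ... + a_k) and p ∤ ∑_{i∈I} a_i for all nonempty proper subsets I ⊆ {1,...,k}, the number of solutions of a_1x_1 + ... + a_kx_k ≡ 0 (mod p) in (Z/pZ)^k with all x_i distinct does not depend on the choice of a_1,...,a_k. -/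
/-!
Sort the solutions `x` of `c ⬝ᵥ x = 0` by `ker x`, the partition of the coordinates into
classes of equal value. Those with `ker x = s` are the maps `y ∘ mk` for the distinct-coordinate
solutions `y` of the collapsed equation on `ι ⧸ s`, whose coefficients are the class sums of `c`.
These again form a minimal zero-sum, so for `s ≠ ⊥` induction on the number of coordinates
shows that the count does not depend on `c`. Neither does the total number of solutions: it is
`|F| ^ (n - 1)` if `c ≠ 0` and `|F| ^ n` otherwise, and a minimal zero-sum vanishes exactly when
`n ≤ 1`. Subtracting leaves the part `s = ⊥`, which consists of the distinct-coordinate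
solutions.
-/

open Finset Function Matrix

section MinimalZeroSum

variable {ι κ M : Type*} [Fintype ι] [AddCommMonoid M]

def IsMinimalZeroSum (c : ι → M) : Prop :=
  ∑ i, c i = 0 ∧ ∀ s : Finset ι, s.Nonempty → s ≠ univ → ∑ i ∈ s, c i ≠ 0

theorem IsMinimalZeroSum.eq_zero_iff {c : ι → M} (hc : IsMinimalZeroSum c) :
    c = 0 ↔ Fintype.card ι ≤ 1 := by
  refine ⟨fun h0 => ?_, fun h1 => ?_⟩
  · by_contra! h2
    obtain ⟨i, j, hij⟩ := Fintype.exists_pair_of_one_lt_card h2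
    refine hc.2 {i} (singleton_nonempty i) (fun h => hij ?_) (by simp [h0])
    exact (mem_singleton.mp (h ▸ mem_univ j)).symm
  · have := Fintype.card_le_one_iff_subsingleton.mp h1
    funext i
    rw [← Fintype.sum_subsingleton c i]
    exact hc.1

variable [DecidableEq κ]

def sumFiber (π : ι → κ) (c : ι → M) (j : κ) : M := ∑ i with π i = j, c i

theorem sum_sumFiber (π : ι → κ) (c : ι → M) (t : Finset κ) :
    ∑ j ∈ t, sumFiber π c j = ∑ i with π i ∈ t, c i := by
  rw [← sum_fiberwise_of_maps_to (g := π) (t := t) (fun i hi => (mem_filter.mp hi).2)]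
  refine sum_congr rfl fun j hj => ?_
  rw [sumFiber, filter_filter]
  congr 1
  ext i
  simp only [mem_filter, mem_univ, true_and]
  exact ⟨fun h => ⟨h ▸ hj, h⟩, And.right⟩

theorem IsMinimalZeroSum.sumFiber [Fintype κ] {c : ι → M} (hc : IsMinimalZeroSum c)
    {π : ι → κ} (hπ : Surjective π) : IsMinimalZeroSum (sumFiber π c) := by
  refine ⟨by simpa [sum_sumFiber] using hc.1, fun t ht htu => ?_⟩
  rw [sum_sumFiber]
  refine hc.2 _ ?_ ?_
  · obtain ⟨j, hj⟩ := ht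
    obtain ⟨i, rfl⟩ := hπ j
    exact ⟨i, by simpa using hj⟩
  · obtain ⟨j, hj⟩ := not_forall.mp (mt eq_univ_iff_forall.mpr htu)
    obtain ⟨i, rfl⟩ := hπ j
    intro h
    have hi : i ∈ ({i | π i ∈ t} : Finset ι) := by rw [h]; exact mem_univ i
    exact hj (mem_filter.mp hi).2

theorem dotProduct_comp_eq_sumFiber [Fintype κ] {R : Type*} [CommSemiring R] (π : ι → κ)
    (c : ι → R) (y : κ → R) : c ⬝ᵥ (y ∘ π) = sumFiber π c ⬝ᵥ y := by
  simp only [dotProduct, sumFiber, sum_mul]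
  rw [← sum_fiberwise univ π]
  refine sum_congr rfl fun j _ => sum_congr rfl fun i hi => ?_
  rw [Function.comp_apply, (mem_filter.mp hi).2]

end MinimalZeroSum

namespace Setoid

variable {ι β : Type*}

instance [Finite ι] : Finite (Setoid ι) :=
  Finite.of_injective (fun s : Setoid ι => ⇑s) fun _ _ h =>
    Setoid.ext fun a b => Iff.of_eq (congrFun₂ h a b)

def kerEqEquiv (s : Setoid ι) (p : (ι → β) → Prop) :
    {f : ι → β // p f ∧ ker f = s} ≃
      {g : Quotient s → β // p (g ∘ Quotient.mk s) ∧ Injective g} where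
  toFun f := ⟨Quotient.lift f.1 f.2.2.ge, f.2.1, (lift_injective_iff_ker_eq_of_le _).2 f.2.2⟩
  invFun g := ⟨g.1 ∘ Quotient.mk s, g.2.1,
    Setoid.ext fun a b => by simp [ker_def, g.2.2.eq_iff, Quotient.eq]⟩
  left_inv _ := rfl
  right_inv g := Subtype.ext <| funext fun q => Quotient.inductionOn q fun _ => rfl

theorem natCard_quotient_lt [Finite ι] {s : Setoid ι} (hs : s ≠ ⊥) :
    Nat.card (Quotient s) < Nat.card ι := by
  classical
  have := Fintype.ofFinite ι
  simp only [Nat.card_eq_fintype_card]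
  refine Fintype.card_lt_of_surjective_not_injective _ Quotient.mk_surjective fun h => hs ?_
  rw [← ker_eq_bot_iff.2 h]
  exact (ker_mk_eq s).symm

end Setoid

theorem Nat.card_subtype_eq_sum_card_fiberwise {α γ : Type*} [Finite α] [Fintype γ]
    (φ : α → γ) (p : α → Prop) :
    Nat.card {a // p a} = ∑ y, Nat.card {a // p a ∧ φ a = y} := by
  rw [← Nat.card_congr (Equiv.sigmaFiberEquiv fun a : {a // p a} => φ a), Nat.card_sigma]
  exact sum_congr rfl fun y _ =>
    Nat.card_congr (Equiv.subtypeSubtypeEquivSubtypeInter p (φ · = y))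

section FiniteField

variable {ι F : Type*} [Fintype ι] [Field F]

theorem natCard_dotProduct_eq_zero {c : ι → F} (hc : c ≠ 0) :
    Nat.card {x : ι → F // c ⬝ᵥ x = 0} = Nat.card F ^ (Fintype.card ι - 1) := by
  classical
  let f : Module.Dual F (ι → F) := dotProductBilin F F c
  have hf : f ≠ 0 := fun h => hc <| funext fun i => by
    simpa [f] using LinearMap.congr_fun h (Pi.single i 1)
  calc Nat.card {x : ι → F // c ⬝ᵥ x = 0} = Nat.card (LinearMap.ker f) := rfl
    _ = Nat.card F ^ (Fintype.card ι - 1) := by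
      rw [Module.natCard_eq_pow_finrank (K := F), ← Module.finrank_fintype_fun_eq_card F,
        ← f.finrank_ker_add_one_of_ne_zero hf, Nat.add_sub_cancel]

theorem IsMinimalZeroSum.natCard_dotProduct_eq_zero_eq {c c' : ι → F}
    (hc : IsMinimalZeroSum c) (hc' : IsMinimalZeroSum c') :
    Nat.card {x : ι → F // c ⬝ᵥ x = 0} = Nat.card {x : ι → F // c' ⬝ᵥ x = 0} := by
  have hiff : c = 0 ↔ c' = 0 := hc.eq_zero_iff.trans hc'.eq_zero_iff.symm
  by_cases h0 : c = 0
  · rw [h0, hiff.1 h0]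
  · rw [natCard_dotProduct_eq_zero h0, natCard_dotProduct_eq_zero (hiff.not.1 h0)]

theorem IsMinimalZeroSum.natCard_injective_eq [Finite F] {c c' : ι → F}
    (hc : IsMinimalZeroSum c) (hc' : IsMinimalZeroSum c') :
    Nat.card {x : ι → F // c ⬝ᵥ x = 0 ∧ Injective x} =
      Nat.card {x : ι → F // c' ⬝ᵥ x = 0 ∧ Injective x} := by
  induction hn : Nat.card ι using Nat.strong_induction_on generalizing ι with | _ n ih =>
  classical
  let := Fintype.ofFinite (Setoid ι)
  have hfiber : ∀ s : Setoid ι, s ≠ ⊥ →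
      Nat.card {x : ι → F // c ⬝ᵥ x = 0 ∧ Setoid.ker x = s} =
        Nat.card {x : ι → F // c' ⬝ᵥ x = 0 ∧ Setoid.ker x = s} := by
    intro s hs
    rw [Nat.card_congr (Setoid.kerEqEquiv s _), Nat.card_congr (Setoid.kerEqEquiv s _)]
    simp only [dotProduct_comp_eq_sumFiber]
    exact ih _ (hn ▸ Setoid.natCard_quotient_lt hs) (hc.sumFiber Quotient.mk_surjective)
      (hc'.sumFiber Quotient.mk_surjective) rfl
  have htotal := hc.natCard_dotProduct_eq_zero_eq hc'
  rw [Nat.card_subtype_eq_sum_card_fiberwise Setoid.ker,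
    Nat.card_subtype_eq_sum_card_fiberwise Setoid.ker, Fintype.sum_eq_add_sum_compl ⊥,
    Fintype.sum_eq_add_sum_compl ⊥,
    sum_congr rfl fun s hs => hfiber s (by simpa using hs)] at htotal
  simpa only [Setoid.ker_eq_bot_iff] using add_right_cancel htotal

end FiniteField

theorem isMinimalZeroSum_intCast_iff {ι : Type*} [Fintype ι] {n : ℕ} {b : ι → ℤ} :
    IsMinimalZeroSum (fun i => (b i : ZMod n)) ↔
      (n : ℤ) ∣ ∑ i, b i ∧
        ∀ s : Finset ι, s.Nonempty → s ≠ univ → ¬ (n : ℤ) ∣ ∑ i ∈ s, b i := by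
  simp only [IsMinimalZeroSum, ← Int.cast_sum, ne_eq, ZMod.intCast_zmod_eq_zero_iff_dvd]

theorem stmt_16 (p : ℕ) (hp : p.Prime) (k : ℕ) (a a' : Fin k → ℤ)
    (hsum : (p : ℤ) ∣ ∑ i, a i) (hsum' : (p : ℤ) ∣ ∑ i, a' i)
    (hI : ∀ I : Finset (Fin k), I.Nonempty → I ≠ Finset.univ → ¬ (p : ℤ) ∣ ∑ i ∈ I, a i)
    (hI' : ∀ I : Finset (Fin k), I.Nonempty → I ≠ Finset.univ → ¬ (p : ℤ) ∣ ∑ i ∈ I, a' i) :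
    Nat.card {x : Fin k → ZMod p //
        ∑ i, (a i : ZMod p) * x i = 0 ∧ Function.Injective x} =
      Nat.card {x : Fin k → ZMod p //
        ∑ i, (a' i : ZMod p) * x i = 0 ∧ Function.Injective x} := by
  have := Fact.mk hp
  exact IsMinimalZeroSum.natCard_injective_eq (isMinimalZeroSum_intCast_iff.2 ⟨hsum, hI⟩)
    (isMinimalZeroSum_intCast_iff.2 ⟨hsum', hI'⟩)
end
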